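/- arXiv:2004.12285 — 5 statements merged into one kernel-verified Lean document; each statement's English description precedes it below -/
import Mathlib

section
/- Let F_q be a finite field of odd characteristic, k a positive even integer with k ≡ 0 mod 4, and suppose G_1^k = q^{k/2} · ε where ε = ±1. Let C_k = {x ∈ F_q^k : -x_1² + x_2² + ... + x_k² = 0}. Then for every m ∈ F_q^k, the normalized Fourier transform satisfies: Ĉ_k(m) = q^{-1}δ_0(m) + η(-1)·q^{-k/2-1}·Σ_{s≠0} χ(Q(m)/(-4s)), where Q(m) = -m_1² + m_2² + ... + m_k². -/
open Finset

section ConeAux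

variable {F : Type*} [Field F] [Fintype F] [DecidableEq F]

private lemma cone_addchar_map_sum {ι : Type*} (ψ : AddChar F ℂ) (s : Finset ι) (f : ι → F) :
    ψ (∑ i ∈ s, f i) = ∏ i ∈ s, ψ (f i) := by
  induction s using Finset.cons_induction with
  | empty => simp
  | cons a s ha ih => rw [Finset.sum_cons, Finset.prod_cons, AddChar.map_add_eq_mul, ih]

private lemma cone_ringchar_ne_two (hq : Odd (Fintype.card F)) : ringChar F ≠ 2 := by
  intro h
  have h2 := FiniteField.even_card_of_char_two h
  have h1 := Nat.odd_iff.mp hq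
  omega

private lemma cone_eta_sq (a : F) (ha : a ≠ 0) :
    ((quadraticChar F).ringHomComp (Int.castRingHom ℂ)) a *
      ((quadraticChar F).ringHomComp (Int.castRingHom ℂ)) a = 1 := by
  have h := quadraticChar_sq_one ha
  simp only [MulChar.ringHomComp_apply]
  rw [(map_mul (Int.castRingHom ℂ) ((quadraticChar F) a) ((quadraticChar F) a)).symm,
    ← pow_two, h]
  simp

private lemma cone_sum_char_sq (hq : Odd (Fintype.card F)) (χ : AddChar F ℂ) (hχ : χ ≠ 1)
    (a : F) (ha : a ≠ 0) :
    ∑ t : F, χ (a * t ^ 2) =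
      ((quadraticChar F).ringHomComp (Int.castRingHom ℂ)) a *
        gaussSum ((quadraticChar F).ringHomComp (Int.castRingHom ℂ)) χ := by
  set η := (quadraticChar F).ringHomComp (Int.castRingHom ℂ) with hη
  have hF2 := cone_ringchar_ne_two (F := F) hq
  have hprim : χ.IsPrimitive := AddChar.IsPrimitive.of_ne_one hχ
  have step1 : ∑ t : F, χ (a * t ^ 2)
      = ∑ u : F, ∑ t ∈ univ.filter (fun t : F => t ^ 2 = u), χ (a * u) := by
    rw [← Finset.sum_fiberwise' univ (fun t : F => t ^ 2) (fun u => χ (a * u))]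
  have step2 : ∀ u : F, ∑ t ∈ univ.filter (fun t : F => t ^ 2 = u), χ (a * u)
      = (((quadraticChar F u : ℤ) : ℂ) + 1) * χ (a * u) := by
    intro u
    rw [Finset.sum_const]
    have hcard : (univ.filter (fun t : F => t ^ 2 = u)).card = quadraticChar F u + 1 := by
      have h := quadraticChar_card_sqrts hF2 u
      rw [← h]
      congr 1
      congr 1
      ext t
      simp
    rw [nsmul_eq_mul]
    congr 1
    have h2 : ((univ.filter (fun t : F => t ^ 2 = u)).card : ℤ) = quadraticChar F u + 1 :=
      hcard
    exact_mod_cast congrArg (Int.cast : ℤ → ℂ) h2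
  rw [step1]
  simp_rw [step2, add_mul, one_mul, Finset.sum_add_distrib]
  have hz : ∑ u : F, χ (a * u) = 0 := by
    simp_rw [mul_comm a]
    rw [AddChar.sum_mulShift a hprim, if_neg ha]; simp
  rw [hz, add_zero]
  have key : η a * ∑ u : F, ((quadraticChar F u : ℤ) : ℂ) * χ (a * u) = gaussSum η χ := by
    have h := gaussSum_mulShift η χ (Units.mk0 a ha)
    simpa [gaussSum, AddChar.mulShift_apply, hη, MulChar.ringHomComp_apply] using h
  calc ∑ u : F, ((quadraticChar F u : ℤ) : ℂ) * χ (a * u)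
      = (η a * η a) * ∑ u : F, ((quadraticChar F u : ℤ) : ℂ) * χ (a * u) := by
        rw [cone_eta_sq a ha, one_mul]
    _ = η a * gaussSum η χ := by rw [mul_assoc, key]

private lemma cone_quad_sum (hq : Odd (Fintype.card F)) (χ : AddChar F ℂ) (hχ : χ ≠ 1)
    (a b : F) (ha : a ≠ 0) :
    ∑ t : F, χ (a * t ^ 2 + b * t)
      = χ (-b ^ 2 / (4 * a)) * ((quadraticChar F).ringHomComp (Int.castRingHom ℂ)) a *
          gaussSum ((quadraticChar F).ringHomComp (Int.castRingHom ℂ)) χ := by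
  have h2 : (2 : F) ≠ 0 := Ring.two_ne_zero (cone_ringchar_ne_two hq)
  have h4 : (4 : F) ≠ 0 := by
    have h44 : (4 : F) = 2 * 2 := by norm_num
    rw [h44]; exact mul_ne_zero h2 h2
  have key : ∑ t : F, χ (a * t ^ 2 + b * t)
      = ∑ t : F, χ (a * t ^ 2 + -b ^ 2 / (4 * a)) := by
    refine (Fintype.sum_equiv (Equiv.subRight (b / (2 * a))) _ _ fun t => ?_).symm
    congr 1
    simp only [Equiv.subRight_apply]
    field_simp
    ring
  rw [key]
  simp_rw [add_comm (a * _ ^ 2), AddChar.map_add_eq_mul, ← Finset.mul_sum,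
    cone_sum_char_sq hq χ hχ a ha]
  ring

private lemma cone_gausspow (hq : Odd (Fintype.card F)) (χ : AddChar F ℂ) (hχ : χ ≠ 1)
    (k : ℕ) (hk4 : k % 4 = 0) :
    gaussSum ((quadraticChar F).ringHomComp (Int.castRingHom ℂ)) χ ^ k
      = (Fintype.card F : ℂ) ^ (k / 2) := by
  have hF2 : ringChar F ≠ 2 := cone_ringchar_ne_two hq
  have hη1 : (quadraticChar F).ringHomComp (Int.castRingHom ℂ) ≠ 1 :=
    (MulChar.ringHomComp_ne_one_iff (RingHom.injective_int _)).mpr (quadraticChar_ne_one hF2)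
  have hquad := (quadraticChar_isQuadratic F).comp (Int.castRingHom ℂ)
  have hprim : χ.IsPrimitive := AddChar.IsPrimitive.of_ne_one hχ
  have hsq := gaussSum_sq hη1 hquad hprim
  obtain ⟨j, hj⟩ : ∃ j, k = 4 * j := ⟨k / 4, by omega⟩
  have hneg : ((quadraticChar F).ringHomComp (Int.castRingHom ℂ)) (-1) ^ 2 = 1 := by
    simp only [MulChar.ringHomComp_apply]
    rw [← map_pow, quadraticChar_sq_one (by norm_num : (-1 : F) ≠ 0)]
    simp
  subst hj
  have h42 : 4 * j = 2 * (2 * j) := by ring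
  rw [h42, pow_mul, hsq, mul_pow, pow_mul, hneg, one_pow, one_mul]
  congr 1
  omega

end ConeAux

/-- General Fourier transform formula for the cone `C_k = {x : Q(x) = 0}` with
`Q(x) = -x₀² + x₁² + ⋯ + x_{k-1}²`, when `k ≡ 0 mod 4` and `G₁^k = q^{k/2}·ε`, `ε = ±1`:
`Ĉ_k(m) = q⁻¹ δ₀(m) + η(-1) q^{-k/2-1} ∑_{s ≠ 0} χ(Q(m)/(-4s))`. -/
theorem cone_fourier_transform {F : Type*} [Field F] [Fintype F] [DecidableEq F]
    (hq : Odd (Fintype.card F)) (χ : AddChar F ℂ) (hχ : χ ≠ 1)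
    (k : ℕ) (hk : 0 < k) (hk4 : k % 4 = 0)
    (ε : ℂ) (hε : ε = 1 ∨ ε = -1)
    (hG : (∑ s : F, χ (s ^ 2)) ^ k = (Fintype.card F : ℂ) ^ (k / 2) * ε)
    (m : Fin k → F) :
    ((Fintype.card F : ℂ) ^ k)⁻¹ *
        ∑ x ∈ Finset.univ.filter (fun x : Fin k → F =>
            -(x ⟨0, hk⟩) ^ 2 + ∑ i ∈ Finset.univ.erase ⟨0, hk⟩, (x i) ^ 2 = 0),
          χ (-(∑ i, m i * x i))
      = (Fintype.card F : ℂ)⁻¹ * (if m = 0 then 1 else 0)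
        + ((quadraticChar F (-1) : ℤ) : ℂ) * ((Fintype.card F : ℂ) ^ (k / 2 + 1))⁻¹ *
            ∑ s ∈ Finset.univ \ {(0 : F)},
              χ ((-(m ⟨0, hk⟩) ^ 2 + ∑ i ∈ Finset.univ.erase ⟨0, hk⟩, (m i) ^ 2) / (-(4 * s))) := by
  classical
  have hF2 : ringChar F ≠ 2 := cone_ringchar_ne_two hq
  have hprim : χ.IsPrimitive := AddChar.IsPrimitive.of_ne_one hχ
  set i0 : Fin k := ⟨0, hk⟩ with hi0
  set η := (quadraticChar F).ringHomComp (Int.castRingHom ℂ) with hη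
  set G := gaussSum η χ with hGdef
  set τ : Fin k → F := fun i => if i = i0 then -1 else 1 with hτ
  have hτ0 : ∀ i, τ i ≠ 0 := by
    intro i
    by_cases h : i = i0 <;> simp [hτ, h]
  -- Q in terms of τ
  have hQ : ∀ x : Fin k → F,
      -(x i0) ^ 2 + ∑ i ∈ Finset.univ.erase i0, (x i) ^ 2 = ∑ i, τ i * (x i) ^ 2 := by
    intro x
    rw [← Finset.add_sum_erase univ (fun i => τ i * (x i) ^ 2) (mem_univ i0)]
    congr 1
    · simp [hτ]
    · refine Finset.sum_congr rfl fun i hi => ?_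
      rw [hτ]
      simp only [Finset.mem_erase] at hi
      simp [hi.1]
  set Q : (Fin k → F) → F := fun x => ∑ i, τ i * (x i) ^ 2 with hQdef
  set T : F → ℂ := fun s => ∑ x : Fin k → F, χ (s * Q x - ∑ i, m i * x i) with hT
  have hq0 : (Fintype.card F : ℂ) ≠ 0 := Nat.cast_ne_zero.mpr Fintype.card_ne_zero
  -- Claim 1
  have claim1 : ∑ s : F, T s
      = (Fintype.card F : ℂ) *
          ∑ x ∈ Finset.univ.filter (fun x : Fin k → F => Q x = 0), χ (-(∑ i, m i * x i)) := by
    rw [hT, Finset.sum_comm]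
    have h1 : ∀ x : Fin k → F, ∑ s : F, χ (s * Q x - ∑ i, m i * x i)
        = (if Q x = 0 then (Fintype.card F : ℂ) else 0) * χ (-(∑ i, m i * x i)) := by
      intro x
      have h2 : ∀ s : F, χ (s * Q x - ∑ i, m i * x i)
          = χ (s * Q x) * χ (-(∑ i, m i * x i)) := by
        intro s
        rw [← AddChar.map_add_eq_mul]
        congr 1
        ring
      simp_rw [h2, ← Finset.sum_mul, AddChar.sum_mulShift _ hprim]
      split_ifs <;> simp
    simp_rw [h1, ite_mul, zero_mul, ← Finset.sum_filter, ← Finset.mul_sum]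
  -- Claim 2
  have claim2 : T 0 = if m = 0 then (Fintype.card F : ℂ) ^ k else 0 := by
    have h1 : ∀ x : Fin k → F, (0 : F) * Q x - ∑ i, m i * x i = ∑ i, -(m i * x i) := by
      intro x
      rw [zero_mul, zero_sub, ← Finset.sum_neg_distrib]
    rw [hT]
    simp_rw [h1, cone_addchar_map_sum χ univ]
    rw [← Fintype.prod_sum fun i t => χ (-(m i * t))]
    have h2 : ∀ i, ∑ t : F, χ (-(m i * t)) = if m i = 0 then (Fintype.card F : ℂ) else 0 := by
      intro i
      have h3 : ∀ t : F, -(m i * t) = t * -(m i) := fun t => by ring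
      simp_rw [h3]
      rw [AddChar.sum_mulShift _ hprim]
      by_cases h : m i = 0 <;> simp [h]
    simp_rw [h2]
    by_cases hm : m = 0
    · subst hm
      simp [Finset.prod_const, Finset.card_univ]
    · rw [if_neg hm]
      obtain ⟨j, hj⟩ := Function.ne_iff.mp hm
      exact Finset.prod_eq_zero (mem_univ j) (by rw [if_neg (by simpa using hj)])
  -- Claim 3
  have claim3 : ∀ s : F, s ≠ 0 →
      T s = χ (Q m / (-(4 * s))) * η (-1) * (Fintype.card F : ℂ) ^ (k / 2) := by
    intro s hs
    have hsτ : ∀ i, s * τ i ≠ 0 := fun i => mul_ne_zero hs (hτ0 i)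
    have expand : ∀ x : Fin k → F, s * Q x - ∑ i, m i * x i
        = ∑ i, ((s * τ i) * (x i) ^ 2 + (-(m i)) * x i) := by
      intro x
      rw [hQdef]
      simp only
      rw [Finset.mul_sum, ← Finset.sum_sub_distrib]
      exact Finset.sum_congr rfl fun i _ => by ring
    rw [hT]
    simp_rw [expand, cone_addchar_map_sum χ univ]
    rw [← Fintype.prod_sum fun i t => χ ((s * τ i) * t ^ 2 + (-(m i)) * t)]
    have hper : ∀ i : Fin k, ∑ t : F, χ ((s * τ i) * t ^ 2 + (-(m i)) * t)
        = χ (-(-(m i)) ^ 2 / (4 * (s * τ i))) * η (s * τ i) * G :=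
      fun i => cone_quad_sum hq χ hχ _ _ (hsτ i)
    rw [Finset.prod_congr rfl fun i _ => hper i]
    rw [Finset.prod_mul_distrib, Finset.prod_mul_distrib, Finset.prod_const,
      Finset.card_univ, Fintype.card_fin]
    have hA : ∏ i : Fin k, χ (-(-(m i)) ^ 2 / (4 * (s * τ i))) = χ (Q m / (-(4 * s))) := by
      rw [← cone_addchar_map_sum χ univ]
      congr 1
      have hptwise : ∀ i : Fin k, -(-(m i)) ^ 2 / (4 * (s * τ i))
          = τ i * (m i) ^ 2 / (-(4 * s)) := by
        intro i
        by_cases h : i = i0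
        · simp only [hτ, h, if_pos]
          field_simp
        · simp only [hτ, if_neg h, mul_one, one_mul, neg_sq, div_neg, neg_div]
      rw [Finset.sum_congr rfl fun i _ => hptwise i, ← Finset.sum_div]
    have hB : ∏ i : Fin k, η (s * τ i) = η (-1) := by
      simp_rw [map_mul]
      rw [Finset.prod_mul_distrib, Finset.prod_const, Finset.card_univ, Fintype.card_fin]
      have hsk : η s ^ k = 1 := by
        have hval : η s = 1 ∨ η s = -1 := by
          rcases quadraticChar_dichotomy hs with h | h
          · left; rw [hη]; simp [MulChar.ringHomComp_apply, h]
          · right; rw [hη]; simp [MulChar.ringHomComp_apply, h]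
        have hev : Even k := ⟨k / 2, by omega⟩
        rcases hval with h | h
        · rw [h, one_pow]
        · rw [h]
          exact hev.neg_one_pow
      have hτprod : ∏ i : Fin k, η (τ i) = η (-1) := by
        simp_rw [hτ, apply_ite η, map_one]
        rw [Finset.prod_ite_eq' univ i0 fun _ => η (-1), if_pos (mem_univ i0)]
      rw [hsk, hτprod, one_mul]
    rw [hA, hB, cone_gausspow hq χ hχ k hk4]
  -- Assembly
  have hsdiff : (univ \ {(0 : F)}) = univ.erase 0 := Finset.sdiff_singleton_eq_erase 0 univ
  have split : ∑ s : F, T s = T 0 + ∑ s ∈ univ \ {(0 : F)}, T s := by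
    rw [hsdiff, Finset.add_sum_erase univ T (mem_univ 0)]
  -- rewrite goal's filter and Q m
  have hfilter : (Finset.univ.filter (fun x : Fin k → F =>
      -(x ⟨0, hk⟩) ^ 2 + ∑ i ∈ Finset.univ.erase ⟨0, hk⟩, (x i) ^ 2 = 0))
      = Finset.univ.filter (fun x : Fin k → F => Q x = 0) := by
    apply Finset.filter_congr
    intro x _
    rw [← hi0, hQ x, hQdef]
  have hQm : -(m ⟨0, hk⟩) ^ 2 + ∑ i ∈ Finset.univ.erase ⟨0, hk⟩, (m i) ^ 2 = Q m := by
    rw [← hi0, hQ m, hQdef]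
  rw [hfilter]
  rw [hQm]
  have hS : ∑ x ∈ Finset.univ.filter (fun x : Fin k → F => Q x = 0), χ (-(∑ i, m i * x i))
      = (Fintype.card F : ℂ)⁻¹ * ∑ s : F, T s := by
    rw [claim1, ← mul_assoc, inv_mul_cancel₀ hq0, one_mul]
  rw [hS, split, claim2, mul_add, mul_add]
  have hη1 : η (-1) = ((quadraticChar F (-1) : ℤ) : ℂ) := by
    rw [hη]; simp [MulChar.ringHomComp_apply]
  have hkk : k / 2 + k / 2 = k := by omega
  have hpow : ((Fintype.card F : ℂ) ^ k)⁻¹ * (Fintype.card F : ℂ)⁻¹ *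
      (Fintype.card F : ℂ) ^ (k / 2) = ((Fintype.card F : ℂ) ^ (k / 2 + 1))⁻¹ := by
    have hq2 : (Fintype.card F : ℂ) ^ (k / 2) ≠ 0 := pow_ne_zero _ hq0
    have h1 : (Fintype.card F : ℂ) ^ k
        = (Fintype.card F : ℂ) ^ (k / 2) * (Fintype.card F : ℂ) ^ (k / 2) := by
      rw [← pow_add, hkk]
    rw [h1, pow_succ, mul_inv, mul_inv]
    calc ((Fintype.card F : ℂ) ^ (k / 2))⁻¹ * ((Fintype.card F : ℂ) ^ (k / 2))⁻¹ *
          (Fintype.card F : ℂ)⁻¹ * (Fintype.card F : ℂ) ^ (k / 2)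
        = (((Fintype.card F : ℂ) ^ (k / 2))⁻¹ * (Fintype.card F : ℂ) ^ (k / 2)) *
            (((Fintype.card F : ℂ) ^ (k / 2))⁻¹ * (Fintype.card F : ℂ)⁻¹) := by ring
      _ = ((Fintype.card F : ℂ) ^ (k / 2))⁻¹ * (Fintype.card F : ℂ)⁻¹ := by
          rw [inv_mul_cancel₀ hq2, one_mul]
  congr 1
  · -- delta term
    by_cases hm : m = 0
    · rw [if_pos hm, if_pos hm, mul_one]
      field_simp
    · rw [if_neg hm, if_neg hm]
      simp
  · -- main term
    calc ((Fintype.card F : ℂ) ^ k)⁻¹ * ((Fintype.card F : ℂ)⁻¹ * ∑ s ∈ univ \ {(0 : F)}, T s)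
        = ∑ s ∈ univ \ {(0 : F)}, ((Fintype.card F : ℂ) ^ k)⁻¹ * (Fintype.card F : ℂ)⁻¹ *
            (Fintype.card F : ℂ) ^ (k / 2) * (((quadraticChar F (-1) : ℤ) : ℂ) *
              χ (Q m / (-(4 * s)))) := by
          rw [Finset.mul_sum, Finset.mul_sum]
          refine Finset.sum_congr rfl fun s hsmem => ?_
          have hs0 : s ≠ 0 := by
            simp only [Finset.mem_sdiff, Finset.mem_singleton] at hsmem
            exact hsmem.2
          rw [claim3 s hs0, hη1]
          ring
      _ = ∑ s ∈ univ \ {(0 : F)}, ((quadraticChar F (-1) : ℤ) : ℂ) *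
            ((Fintype.card F : ℂ) ^ (k / 2 + 1))⁻¹ * χ (Q m / (-(4 * s))) := by
          refine Finset.sum_congr rfl fun s _ => ?_
          rw [hpow]
          ring
      _ = ((quadraticChar F (-1) : ℤ) : ℂ) * ((Fintype.card F : ℂ) ^ (k / 2 + 1))⁻¹ *
            ∑ s ∈ univ \ {(0 : F)}, χ (Q m / (-(4 * s))) := by
          rw [Finset.mul_sum]
end

section
/- Let q ≡ 3 mod 4 and k ≡ 0 mod 4. Let C_k = {x ∈ F_q^k : -x_1² + x_2² + ... + x_k² = 0} and let Ĉ_k(m) = q^{-k} Σ_{x∈C_k} χ(-m·x). Then Ĉ_k(m) = q^{-1}δ_0(m) - q^{-k/2} + q^{-(k+2)/2} if Q(m) = 0, and Ĉ_k(m) = q^{-(k+2)/2} if Q(m) ≠ 0, where Q(m) = -m_1² + m_2² + ... + m_k². -/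
open Finset

private lemma addChar_map_sum {A M : Type*} [AddCommMonoid A] [CommMonoid M] {ι : Type*}
    (ψ : AddChar A M) (f : ι → A) (s : Finset ι) :
    ψ (∑ i ∈ s, f i) = ∏ i ∈ s, ψ (f i) := by
  induction s using Finset.cons_induction with
  | empty => simp
  | cons i s hi ih => rw [Finset.sum_cons, Finset.prod_cons, ψ.map_add_eq_mul, ih]

section FF
variable {F : Type*} [Field F] [Fintype F] [DecidableEq F]

private lemma sum_sq_char (hF2 : ringChar F ≠ 2) {χ : AddChar F ℂ} (hχ : χ ≠ 1)
    {c : F} (hc : c ≠ 0) :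
    ∑ y : F, χ (c * y ^ 2) =
      ((quadraticChar F).ringHomComp (Int.castRingHom ℂ)) c *
        gaussSum ((quadraticChar F).ringHomComp (Int.castRingHom ℂ)) χ := by
  set η := (quadraticChar F).ringHomComp (Int.castRingHom ℂ) with hη
  have hprim : χ.IsPrimitive := AddChar.IsPrimitive.of_ne_one hχ
  -- fiber the sum over s = y^2
  have h1 : ∑ y : F, χ (c * y ^ 2) = ∑ s : F, ((quadraticChar F s : ℂ) + 1) * χ (c * s) := by
    rw [← Finset.sum_fiberwise_of_maps_to (g := fun y : F => y ^ 2)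
      (fun x _ => Finset.mem_univ _) (fun y => χ (c * y ^ 2))]
    refine Finset.sum_congr rfl fun s _ => ?_
    have h2 : ∀ y ∈ Finset.univ.filter (fun y : F => y ^ 2 = s), χ (c * y ^ 2) = χ (c * s) := by
      intro y hy
      rw [(Finset.mem_filter.1 hy).2]
    rw [Finset.sum_congr rfl h2, Finset.sum_const, nsmul_eq_mul]
    congr 1
    have := quadraticChar_card_sqrts hF2 s
    have hcard : ({x : F | x ^ 2 = s}.toFinset.card : ℤ)
        = (Finset.univ.filter (fun y : F => y ^ 2 = s)).card := by
      congr 1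
      apply Finset.card_bij (fun a _ => a) <;> simp [Set.mem_toFinset]
    rw [hcard] at this
    exact_mod_cast congrArg (Int.cast : ℤ → ℂ) this
  rw [h1]
  simp_rw [add_mul, one_mul, Finset.sum_add_distrib]
  have h3 : ∑ s : F, χ (c * s) = 0 := by
    have := AddChar.sum_mulShift c hprim
    simp_rw [mul_comm] at this
    rw [this, if_neg hc, Nat.cast_zero]
  rw [h3, add_zero]
  -- remaining sum is gaussSum of the shifted character
  have h4 : ∑ s : F, ((quadraticChar F s : ℂ)) * χ (c * s) = gaussSum η (χ.mulShift c) := by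
    simp [gaussSum, AddChar.mulShift_apply, hη]
  rw [h4]
  have hu : η c * gaussSum η (χ.mulShift c) = gaussSum η χ := by
    have := gaussSum_mulShift η χ (Units.mk0 c hc)
    simpa using this
  have hsq : η c * η c = 1 := by
    have := quadraticChar_sq_one hc
    have : (quadraticChar F c : ℂ) ^ 2 = 1 := by exact_mod_cast congrArg (Int.cast : ℤ → ℂ) this
    simpa [hη, sq, MulChar.ringHomComp_apply] using this
  calc gaussSum η (χ.mulShift c) = (η c * η c) * gaussSum η (χ.mulShift c) := by rw [hsq, one_mul]
    _ = η c * gaussSum η χ := by rw [mul_assoc, hu]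

private lemma complete_square (hF2 : ringChar F ≠ 2) {χ : AddChar F ℂ} (hχ : χ ≠ 1)
    {c : F} (hc : c ≠ 0) (b : F) :
    ∑ y : F, χ (c * y ^ 2 + b * y) =
      χ (-b ^ 2 / (4 * c)) * (((quadraticChar F).ringHomComp (Int.castRingHom ℂ)) c *
        gaussSum ((quadraticChar F).ringHomComp (Int.castRingHom ℂ)) χ) := by
  have h2 : (2 : F) ≠ 0 := Ring.two_ne_zero hF2
  have h4 : (4 : F) ≠ 0 := by
    have : (4 : F) = 2 * 2 := by norm_num
    rw [this]; exact mul_ne_zero h2 h2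
  set d := b / (2 * c) with hd
  have key : ∀ y : F, c * (y - d) ^ 2 + b * (y - d) = c * y ^ 2 + -b ^ 2 / (4 * c) := by
    intro y
    rw [hd]
    field_simp
    ring
  have hbij : ∑ y : F, χ (c * y ^ 2 + b * y) = ∑ y : F, χ (c * (y - d) ^ 2 + b * (y - d)) :=
    (Fintype.sum_equiv (Equiv.subRight d) _ _ (fun y => rfl)).symm
  rw [hbij]
  simp_rw [key]
  simp_rw [AddChar.map_add_eq_mul]
  rw [← Finset.sum_mul, sum_sq_char hF2 hχ hc]
  ring

private lemma gauss_sq (hq : Fintype.card F % 4 = 3) {χ : AddChar F ℂ} (hχ : χ ≠ 1) :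
    gaussSum ((quadraticChar F).ringHomComp (Int.castRingHom ℂ)) χ ^ 2 =
      -(Fintype.card F : ℂ) := by
  have hF2 : ringChar F ≠ 2 := by
    intro h
    have := FiniteField.even_card_of_char_two h
    omega
  set η := (quadraticChar F).ringHomComp (Int.castRingHom ℂ) with hη
  have hη1 : η ≠ 1 :=
    (MulChar.ringHomComp_ne_one_iff (RingHom.injective_int _)).2 (quadraticChar_ne_one hF2)
  have hηq : η.IsQuadratic := (quadraticChar_isQuadratic F).comp _
  have hprim : χ.IsPrimitive := AddChar.IsPrimitive.of_ne_one hχ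
  rw [gaussSum_sq hη1 hηq hprim]
  have hneg : quadraticChar F (-1) = -1 := by
    rw [quadraticChar_neg_one hF2, ZMod.χ₄_nat_eq_if_mod_four]
    have : Fintype.card F % 2 = 1 := by omega
    rw [if_neg (by omega), if_neg (by omega)]
  have : η (-1) = -1 := by
    simp [hη, MulChar.ringHomComp_apply, hneg]
  rw [this]; ring

private lemma eta_neg_one (hq : Fintype.card F % 4 = 3) :
    ((quadraticChar F).ringHomComp (Int.castRingHom ℂ)) (-1) = -1 := by
  have hF2 : ringChar F ≠ 2 := by
    intro h
    have := FiniteField.even_card_of_char_two h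
    omega
  have hneg : quadraticChar F (-1) = -1 := by
    rw [quadraticChar_neg_one hF2, ZMod.χ₄_nat_eq_if_mod_four]
    rw [if_neg (by omega), if_neg (by omega)]
  simp [MulChar.ringHomComp_apply, hneg]

end FF

/-- Explicit Fourier transform of the cone `C_k` for `q ≡ 3 mod 4`, `k ≡ 0 mod 4`:
`Ĉ_k(m) = q⁻¹δ₀(m) - q^{-k/2} + q^{-(k+2)/2}` if `Q(m) = 0`, and
`Ĉ_k(m) = q^{-(k+2)/2}` otherwise. -/
theorem cone_fourier_transform_explicit {F : Type*} [Field F] [Fintype F] [DecidableEq F]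
    (hq : Fintype.card F % 4 = 3) (χ : AddChar F ℂ) (hχ : χ ≠ 1)
    (k : ℕ) (hk : 0 < k) (hk4 : k % 4 = 0)
    (m : Fin k → F) :
    ((Fintype.card F : ℂ) ^ k)⁻¹ *
        ∑ x ∈ Finset.univ.filter (fun x : Fin k → F =>
            -(x ⟨0, hk⟩) ^ 2 + ∑ i ∈ Finset.univ.erase ⟨0, hk⟩, (x i) ^ 2 = 0),
          χ (-(∑ i, m i * x i))
      = if -(m ⟨0, hk⟩) ^ 2 + ∑ i ∈ Finset.univ.erase ⟨0, hk⟩, (m i) ^ 2 = 0 then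
          (Fintype.card F : ℂ)⁻¹ * (if m = 0 then 1 else 0)
            - ((Fintype.card F : ℂ) ^ (k / 2))⁻¹ + ((Fintype.card F : ℂ) ^ ((k + 2) / 2))⁻¹
        else ((Fintype.card F : ℂ) ^ ((k + 2) / 2))⁻¹ := by
  classical
  have hF2 : ringChar F ≠ 2 := by
    intro h
    have := FiniteField.even_card_of_char_two h
    omega
  set q : ℂ := (Fintype.card F : ℂ) with hqdef
  have hq0 : q ≠ 0 := by
    simp only [hqdef, Ne, Nat.cast_eq_zero]
    exact Fintype.card_ne_zero
  have h2 : (2 : F) ≠ 0 := Ring.two_ne_zero hF2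
  have h4 : (4 : F) ≠ 0 := by
    have h : (4 : F) = 2 * 2 := by norm_num
    rw [h]; exact mul_ne_zero h2 h2
  have hprim : χ.IsPrimitive := AddChar.IsPrimitive.of_ne_one hχ
  set η := (quadraticChar F).ringHomComp (Int.castRingHom ℂ) with hηdef
  set G := gaussSum η χ with hGdef
  -- integers
  obtain ⟨j, hj⟩ : ∃ j, k = 4 * j := ⟨k / 4, by omega⟩
  set K := k / 2 with hKdef
  have hk2 : k = 2 * K := by omega
  have hK2j : K = 2 * j := by omega
  have hGk : G ^ k = q ^ K := by
    rw [hk2, pow_mul, gauss_sq hq hχ, hK2j, pow_mul, pow_mul]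
    norm_num [hqdef]
  -- the coefficient vector
  set z : Fin k := ⟨0, hk⟩ with hzdef
  set a : Fin k → F := fun i => if i = z then -1 else 1 with hadef
  have ha_ne : ∀ i, a i ≠ 0 := by
    intro i; by_cases h : i = z <;> simp [hadef, h]
  have ha_sq : ∀ i, a i * a i = 1 := by
    intro i; by_cases h : i = z <;> simp [hadef, h]
  have hQ : ∀ x : Fin k → F,
      -(x z) ^ 2 + ∑ i ∈ Finset.univ.erase z, (x i) ^ 2 = ∑ i, a i * x i ^ 2 := by
    intro x
    rw [← Finset.add_sum_erase Finset.univ (fun i => a i * x i ^ 2) (Finset.mem_univ z)]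
    congr 1
    · simp [hadef]
    · exact (Finset.sum_congr rfl fun i hi => by
        simp [hadef, (Finset.mem_erase.1 hi).1]).symm
  have hQm0 : (0 : Fin k → F) ∈ Finset.univ.filter
      (fun x : Fin k → F => True) := by simp
  -- per-coordinate factorization
  have hfact : ∀ t : F,
      ∑ x : Fin k → F, χ (t * (∑ i, a i * x i ^ 2) - ∑ i, m i * x i)
        = ∏ i, ∑ y : F, χ (t * a i * y ^ 2 - m i * y) := by
    intro t
    have hsplit : ∀ x : Fin k → F,
        t * (∑ i, a i * x i ^ 2) - ∑ i, m i * x i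
          = ∑ i, (t * a i * x i ^ 2 - m i * x i) := by
      intro x
      rw [Finset.mul_sum, ← Finset.sum_sub_distrib]
      exact Finset.sum_congr rfl fun i _ => by ring
    simp_rw [hsplit, addChar_map_sum]
    exact (Fintype.prod_sum (κ := fun _ : Fin k => F) fun i y => χ (t * a i * y ^ 2 - m i * y)).symm
  -- value at t = 0
  have hT0 : ∏ i, ∑ y : F, χ ((0:F) * a i * y ^ 2 - m i * y)
      = if m = 0 then q ^ k else 0 := by
    have hterm : ∀ i : Fin k, ∑ y : F, χ ((0:F) * a i * y ^ 2 - m i * y)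
        = if m i = 0 then q else 0 := by
      intro i
      have h1 : ∀ y : F, (0:F) * a i * y ^ 2 - m i * y = y * (-(m i)) := by
        intro y; ring
      simp_rw [h1]
      rw [AddChar.sum_mulShift _ hprim]
      by_cases h : m i = 0 <;> simp [h, hqdef]
    simp_rw [hterm]
    by_cases hm : m = 0
    · simp [hm, Finset.prod_const]
    · obtain ⟨i, hi⟩ := Function.ne_iff.1 hm
      simp only [Pi.zero_apply] at hi
      rw [if_neg hm]
      refine Finset.prod_eq_zero (Finset.mem_univ i) ?_
      exact if_neg hi
  -- value at t ≠ 0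
  have hTt : ∀ t : F, t ≠ 0 →
      ∏ i, ∑ y : F, χ (t * a i * y ^ 2 - m i * y)
        = χ ((∑ i, a i * m i ^ 2) / (-(4 * t))) * (-(q ^ K)) := by
    intro t ht
    have hterm : ∀ i : Fin k, ∑ y : F, χ (t * a i * y ^ 2 - m i * y)
        = χ (-(m i) ^ 2 / (4 * (t * a i))) * (η (t * a i) * G) := by
      intro i
      have h1 : ∀ y : F, t * a i * y ^ 2 - m i * y = (t * a i) * y ^ 2 + (-(m i)) * y := by
        intro y; ring
      simp_rw [h1]
      rw [complete_square hF2 hχ (mul_ne_zero ht (ha_ne i)) (-(m i)), neg_sq]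
    simp_rw [hterm]
    rw [Finset.prod_mul_distrib, Finset.prod_mul_distrib]
    rw [← addChar_map_sum]
    have hsum : ∑ i, -(m i) ^ 2 / (4 * (t * a i)) = (∑ i, a i * m i ^ 2) / (-(4 * t)) := by
      rw [Finset.sum_div]
      refine Finset.sum_congr rfl fun i _ => ?_
      have h4t : (4 : F) * t ≠ 0 := mul_ne_zero h4 ht
      have h4t : (4 : F) * t ≠ 0 := mul_ne_zero h4 ht
      rcases eq_or_ne i z with h | h
      · simp only [hadef, if_pos h]
        field_simp
      · simp only [hadef, if_neg h]
        field_simp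
    rw [hsum]
    have hprod_eta : ∏ i, η (t * a i) = -1 := by
      simp_rw [map_mul]
      rw [Finset.prod_mul_distrib]
      have h1 : ∏ _i : Fin k, η t = (η t) ^ k := by
        rw [Finset.prod_const, Finset.card_univ, Fintype.card_fin]
      have hsq : (η t) ^ 2 = 1 := by
        have h0 := quadraticChar_sq_one ht
        have h0' : (quadraticChar F t : ℂ) ^ 2 = 1 := by
          exact_mod_cast congrArg (Int.cast : ℤ → ℂ) h0
        simpa [hηdef, MulChar.ringHomComp_apply] using h0'
      have h2' : (η t) ^ k = 1 := by
        rw [hk2, pow_mul, hsq, one_pow]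
      have h3 : ∏ i, η (a i) = -1 := by
        rw [Finset.prod_eq_single z (fun i _ hi => by simp [hadef, hi]) (by simp)]
        have := eta_neg_one (F := F) hq
        simpa [hadef, hηdef] using this
      rw [h1, h2', h3, one_mul]
    have hprodG : ∏ _i : Fin k, G = q ^ K := by
      rw [Finset.prod_const, Finset.card_univ, Fintype.card_fin, hGk]
    rw [hprod_eta, hprodG]
    ring
  -- indicator via character sum
  have hind : ∀ b : F, (∑ t : F, χ (t * b)) = if b = 0 then q else 0 := by
    intro b
    have h := AddChar.sum_mulShift b hprim
    rw [h]
    by_cases hb : b = 0 <;> simp [hb, hqdef]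
  -- sum over nonzero t
  have hsumt : ∑ t ∈ Finset.univ.erase (0:F), χ ((∑ i, a i * m i ^ 2) / (-(4 * t)))
      = (if (∑ i, a i * m i ^ 2) = 0 then q else 0) - 1 := by
    set Qm := ∑ i, a i * m i ^ 2 with hQmdef
    have hb : ∑ t ∈ Finset.univ.erase (0:F), χ (Qm / (-(4 * t)))
        = ∑ u ∈ Finset.univ.erase (0:F), χ (Qm * u) := by
      refine Finset.sum_nbij' (fun t => (-(4 * t))⁻¹) (fun u => (-(4 * u))⁻¹) ?_ ?_ ?_ ?_ ?_
      · intro t ht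
        rw [Finset.mem_erase] at ht ⊢
        exact ⟨inv_ne_zero (neg_ne_zero.2 (mul_ne_zero h4 ht.1)), Finset.mem_univ _⟩
      · intro u hu
        rw [Finset.mem_erase] at hu ⊢
        exact ⟨inv_ne_zero (neg_ne_zero.2 (mul_ne_zero h4 hu.1)), Finset.mem_univ _⟩
      · intro t ht
        rw [Finset.mem_erase] at ht
        field_simp
      · intro u hu
        rw [Finset.mem_erase] at hu
        field_simp
      · intro t ht
        rw [div_eq_mul_inv]
    rw [hb, Finset.sum_erase_eq_sub (Finset.mem_univ (0:F))]
    have h1 : ∑ u : F, χ (Qm * u) = if Qm = 0 then q else 0 := by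
      have h := AddChar.sum_mulShift Qm hprim
      simp_rw [mul_comm Qm]
      rw [h]
      by_cases hb : Qm = 0 <;> simp [hb, hqdef]
    rw [h1, mul_zero, AddChar.map_zero_eq_one]
  -- assemble: q * S = ...
  have hmain : q * (∑ x ∈ Finset.univ.filter (fun x : Fin k → F =>
          (∑ i, a i * x i ^ 2) = 0), χ (-(∑ i, m i * x i)))
      = (if m = 0 then q ^ k else 0)
        + ((if (∑ i, a i * m i ^ 2) = 0 then q else 0) - 1) * (-(q ^ K)) := by
    have e2 : ∑ x : Fin k → F, (∑ t : F, χ (t * (∑ i, a i * x i ^ 2))) * χ (-(∑ i, m i * x i))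
        = q * ∑ x ∈ Finset.univ.filter (fun x : Fin k → F =>
            (∑ i, a i * x i ^ 2) = 0), χ (-(∑ i, m i * x i)) := by
      simp_rw [hind, ite_mul, zero_mul]
      rw [← Finset.sum_filter, Finset.mul_sum]
    rw [← e2]
    have e3 : ∑ x : Fin k → F, (∑ t : F, χ (t * (∑ i, a i * x i ^ 2))) * χ (-(∑ i, m i * x i))
        = ∑ t : F, ∑ x : Fin k → F,
            χ (t * (∑ i, a i * x i ^ 2) - ∑ i, m i * x i) := by
      simp_rw [Finset.sum_mul]
      rw [Finset.sum_comm]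
      simp_rw [sub_eq_add_neg, AddChar.map_add_eq_mul]
    rw [e3, ← Finset.add_sum_erase _ _ (Finset.mem_univ (0:F))]
    congr 1
    · rw [hfact 0, hT0]
    · rw [Finset.sum_congr rfl (fun t ht => by
        rw [hfact t, hTt t (Finset.mem_erase.1 ht).1])]
      rw [← Finset.sum_mul, hsumt]
  -- rewrite the filter in the goal
  have efil : Finset.univ.filter (fun x : Fin k → F =>
        -(x z) ^ 2 + ∑ i ∈ Finset.univ.erase z, (x i) ^ 2 = 0)
      = Finset.univ.filter (fun x : Fin k → F => (∑ i, a i * x i ^ 2) = 0) := by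
    apply Finset.filter_congr
    intro x _
    rw [hQ x]
  rw [efil, hQ m]
  have hS : (∑ x ∈ Finset.univ.filter (fun x : Fin k → F =>
          (∑ i, a i * x i ^ 2) = 0), χ (-(∑ i, m i * x i)))
      = q⁻¹ * ((if m = 0 then q ^ k else 0)
        + ((if (∑ i, a i * m i ^ 2) = 0 then q else 0) - 1) * (-(q ^ K))) := by
    rw [← hmain, inv_mul_cancel_left₀ hq0]
  rw [hS]
  have hK1 : (k + 2) / 2 = K + 1 := by omega
  rw [hK1]
  have hkKK : k = K + K := by omega
  have hP0 : q ^ K ≠ 0 := pow_ne_zero _ hq0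
  by_cases hQm : (∑ i, a i * m i ^ 2) = 0
  · rw [if_pos hQm, if_pos hQm]
    by_cases hm : m = 0
    · rw [if_pos hm, if_pos hm, hkKK, pow_add]
      field_simp
      ring
    · rw [if_neg hm, if_neg hm, hkKK, pow_add]
      field_simp
      ring
  · rw [if_neg hQm, if_neg hQm]
    have hm : m ≠ 0 := by
      intro h0
      apply hQm
      rw [h0]
      simp
    rw [if_neg hm, hkKK, pow_add]
    field_simp
    ring
end

section
/- Let k ≥ 3 be odd and q an odd prime power. Let C_k = {x ∈ F_q^k : -x_1² + x_2² + ... + x_k² = 0}. Then Ĉ_k(m) = q^{-1}δ_0(m) + q^{-k-1}·η(Q(m))·G_1^{k+1}, where Q(m) = -m_1² + m_2² + ... + m_k², with the convention η(0) = 0. -/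
open Finset

namespace ConeAux

variable {F : Type*} [Field F] [Fintype F] [DecidableEq F]

lemma char_ne_two (hq : Odd (Fintype.card F)) : ringChar F ≠ 2 := by
  intro h
  rw [Nat.odd_iff] at hq
  have := FiniteField.even_card_iff_char_two.mp h
  omega

/-- cast of the quadratic character -/
noncomputable def ηC (F : Type*) [Field F] [Fintype F] [DecidableEq F] : MulChar F ℂ :=
  (quadraticChar F).ringHomComp (Int.castRingHom ℂ)

lemma ηC_apply (a : F) : ηC F a = ((quadraticChar F a : ℤ) : ℂ) := rfl

lemma ηC_sq {a : F} (ha : a ≠ 0) : ηC F a * ηC F a = 1 := by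
  have : ηC F a * ηC F a = (((quadraticChar F a ^ 2 : ℤ)) : ℂ) := by
    rw [ηC_apply]; push_cast; ring
  rw [this, quadraticChar_sq_one ha, Int.cast_one]

lemma sum_mul_eq (χ : AddChar F ℂ) (hχ : χ ≠ 1) (c : F) :
    ∑ y : F, χ (c * y) = if c = 0 then (Fintype.card F : ℂ) else 0 := by
  simp_rw [mul_comm c]
  rw [AddChar.sum_mulShift c (AddChar.IsPrimitive.of_ne_one hχ)]
  split <;> simp

/-- grouping by squares -/
lemma sum_char_sq (hq : Odd (Fintype.card F)) (χ : AddChar F ℂ) (b : F) :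
    ∑ x : F, χ (b * x ^ 2) = ∑ y : F, (1 + ηC F y) * χ (b * y) := by
  rw [← Finset.sum_fiberwise' univ (fun x : F => x ^ 2) (fun y => χ (b * y))]
  refine Finset.sum_congr rfl fun y _ => ?_
  rw [Finset.sum_const, nsmul_eq_mul]
  congr 1
  have := quadraticChar_card_sqrts (char_ne_two hq) y
  rw [Set.toFinset_setOf] at this
  have h2 : ((#(filter (fun x : F => x ^ 2 = y) univ) : ℤ) : ℂ) = ((quadraticChar F y + 1 : ℤ) : ℂ) := by
    exact_mod_cast congrArg (fun z : ℤ => (z : ℂ)) this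
  push_cast at h2 ⊢
  simp [h2, ηC_apply, add_comm]

lemma sum_eta_char (hq : Odd (Fintype.card F)) (χ : AddChar F ℂ) (hχ : χ ≠ 1) :
    ∑ y : F, ηC F y * χ y = ∑ s : F, χ (s ^ 2) := by
  have h := sum_char_sq hq χ 1
  simp_rw [one_mul] at h
  simp_rw [add_mul, one_mul] at h
  rw [h, Finset.sum_add_distrib, AddChar.sum_eq_zero_of_ne_one hχ, zero_add]

lemma sum_eta_char_mul (hq : Odd (Fintype.card F)) (χ : AddChar F ℂ) (hχ : χ ≠ 1)
    {a : F} (ha : a ≠ 0) :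
    ∑ y : F, ηC F y * χ (a * y) = ηC F a * ∑ s : F, χ (s ^ 2) := by
  have key : ∀ y : F, ηC F y = ηC F a * ηC F (a * y) := by
    intro y
    rw [map_mul, ← mul_assoc, ηC_sq ha, one_mul]
  calc ∑ y : F, ηC F y * χ (a * y)
      = ∑ y : F, ηC F a * (ηC F (a * y) * χ (a * y)) :=
        Finset.sum_congr rfl fun y _ => by rw [← mul_assoc, ← key y]
    _ = ηC F a * ∑ y : F, ηC F (a * y) * χ (a * y) := by rw [← Finset.mul_sum]
    _ = ηC F a * ∑ s : F, χ (s ^ 2) := by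
        congr 1
        rw [← sum_eta_char hq χ hχ]
        exact Fintype.sum_bijective _ (mulLeft_bijective₀ a ha) _ _ fun y => rfl

/-- Gauss-type sum for a pure quadratic -/
lemma sum_char_mul_sq (hq : Odd (Fintype.card F)) (χ : AddChar F ℂ) (hχ : χ ≠ 1)
    {a : F} (ha : a ≠ 0) :
    ∑ x : F, χ (a * x ^ 2) = ηC F a * ∑ s : F, χ (s ^ 2) := by
  rw [sum_char_sq hq χ a]
  simp_rw [add_mul, one_mul]
  rw [Finset.sum_add_distrib, sum_mul_eq χ hχ a, if_neg ha, zero_add]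
  exact sum_eta_char_mul hq χ hχ ha

end ConeAux

namespace Part2
open ConeAux
variable {F : Type*} [Field F] [Fintype F] [DecidableEq F]

lemma map_sum' {ι : Type*} (χ : AddChar F ℂ) (s : Finset ι) (f : ι → F) :
    χ (∑ i ∈ s, f i) = ∏ i ∈ s, χ (f i) := by
  induction s using Finset.cons_induction with
  | empty => simp
  | cons a s ha ih => rw [Finset.sum_cons, Finset.prod_cons, AddChar.map_add_eq_mul, ih]

lemma four_ne_zero (hq : Odd (Fintype.card F)) : (4 : F) ≠ 0 := by
  have h2 : (2 : F) ≠ 0 := Ring.two_ne_zero (char_ne_two hq)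
  intro h
  apply h2
  have h4 : (4 : F) = 2 * 2 := by norm_num
  rcases mul_eq_zero.mp (h4 ▸ h) with h' | h' <;> exact h'

lemma complete_square (hq : Odd (Fintype.card F)) (χ : AddChar F ℂ) (hχ : χ ≠ 1)
    {a : F} (ha : a ≠ 0) (b : F) :
    ∑ x : F, χ (a * x ^ 2 + b * x)
      = χ (-b ^ 2 / (4 * a)) * (ηC F a * ∑ s : F, χ (s ^ 2)) := by
  have h2 : (2 : F) ≠ 0 := Ring.two_ne_zero (char_ne_two hq)
  have key : ∀ x : F, a * (x - b / (2 * a)) ^ 2 + b * (x - b / (2 * a))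
      = -b ^ 2 / (4 * a) + a * x ^ 2 := by
    intro x
    have h4 : (4 : F) ≠ 0 := four_ne_zero hq
    field_simp
    ring
  calc ∑ x : F, χ (a * x ^ 2 + b * x)
      = ∑ x : F, χ (a * (x - b / (2 * a)) ^ 2 + b * (x - b / (2 * a))) :=
        (Equiv.sum_comp (Equiv.subRight (b / (2 * a)))
          (fun x => χ (a * x ^ 2 + b * x))).symm
    _ = ∑ x : F, χ (-b ^ 2 / (4 * a)) * χ (a * x ^ 2) := by
        simp_rw [key, AddChar.map_add_eq_mul]
    _ = χ (-b ^ 2 / (4 * a)) * ∑ x : F, χ (a * x ^ 2) := by rw [← Finset.mul_sum]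
    _ = _ := by rw [sum_char_mul_sq hq χ hχ ha]

lemma ηC_inv (t : F) : ηC F t⁻¹ = ηC F t := by
  rcases eq_or_ne t 0 with h | h
  · rw [h, inv_zero]
  · have h1 : ηC F t⁻¹ * ηC F t = 1 := by
      rw [← map_mul, inv_mul_cancel₀ h, map_one]
    calc ηC F t⁻¹ = ηC F t⁻¹ * (ηC F t * ηC F t) := by rw [ηC_sq h, mul_one]
      _ = (ηC F t⁻¹ * ηC F t) * ηC F t := by ring
      _ = ηC F t := by rw [h1, one_mul]

lemma ηC_zero : ηC F 0 = 0 := by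
  rw [ηC_apply]; simp

lemma sum_eta_sum_zero (hq : Odd (Fintype.card F)) : ∑ t : F, ηC F t = 0 := by
  have := quadraticChar_sum_zero (char_ne_two hq)
  have h2 : ((∑ a : F, quadraticChar F a : ℤ) : ℂ) = 0 := by rw [this]; simp
  push_cast at h2
  exact h2

lemma sum_eta_inv (hq : Odd (Fintype.card F)) (χ : AddChar F ℂ) (hχ : χ ≠ 1) (c : F) :
    ∑ t ∈ Finset.univ.erase (0 : F), ηC F t * χ (c * t⁻¹)
      = ηC F c * ∑ s : F, χ (s ^ 2) := by
  have h0 : ηC F (0:F) * χ (c * (0:F)⁻¹) = 0 := by rw [ηC_zero, zero_mul]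
  rw [Finset.sum_erase (f := fun t : F => ηC F t * χ (c * t⁻¹)) univ h0]
  have hbij : Function.Bijective (fun t : F => t⁻¹) :=
    Function.Involutive.bijective inv_inv
  have h1 : ∑ t : F, ηC F t * χ (c * t⁻¹) = ∑ t : F, ηC F t * χ (c * t) :=
    Fintype.sum_bijective _ hbij _ _ (fun t => by rw [ηC_inv])
  rw [h1]
  rcases eq_or_ne c 0 with hc | hc
  · simp only [hc, zero_mul, AddChar.map_zero_eq_one, mul_one, ηC_zero, zero_mul]
    exact sum_eta_sum_zero hq
  · exact sum_eta_char_mul hq χ hχ hc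

lemma sum_delta (χ : AddChar F ℂ) (hχ : χ ≠ 1) {k : ℕ} (m : Fin k → F) :
    ∑ x : Fin k → F, χ (-(∑ i, m i * x i))
      = if m = 0 then ((Fintype.card F : ℂ)) ^ k else 0 := by
  have step : ∀ x : Fin k → F, χ (-(∑ i, m i * x i)) = ∏ i, χ (-(m i) * x i) := by
    intro x
    rw [← map_sum']
    congr 1
    rw [← Finset.sum_neg_distrib]
    exact Finset.sum_congr rfl fun i _ => by ring
  simp_rw [step]
  rw [show (∑ x : Fin k → F, ∏ i, χ (-m i * x i))
      = ∑ x ∈ Fintype.piFinset (fun _ : Fin k => (univ : Finset F)), ∏ i, χ (-m i * x i) by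
        rw [Fintype.piFinset_univ],
    ← Finset.prod_univ_sum (fun _ : Fin k => (univ : Finset F)) (fun i y => χ (-m i * y))]
  rcases eq_or_ne m 0 with hm | hm
  · subst hm
    simp only [Pi.zero_apply, neg_zero, zero_mul, AddChar.map_zero_eq_one, if_true]
    simp [Finset.card_univ]
  · rw [if_neg hm]
    obtain ⟨i, hi⟩ : ∃ i, m i ≠ 0 := by
      by_contra h
      push_neg at h
      exact hm (funext h)
    apply Finset.prod_eq_zero (Finset.mem_univ i)
    rw [sum_mul_eq χ hχ (-(m i)), if_neg (neg_ne_zero.mpr hi)]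

end Part2

namespace Part3
open ConeAux Part2
variable {F : Type*} [Field F] [Fintype F] [DecidableEq F]

lemma ηC_sq' {a : F} (ha : a ≠ 0) : ηC F (a ^ 2) = 1 := by
  rw [ηC_apply, quadraticChar_sq_one' ha]; simp

lemma ηC_pow_odd {k : ℕ} (hkodd : Odd k) {t : F} (ht : t ≠ 0) :
    ηC F t ^ k = ηC F t := by
  obtain ⟨j, hj⟩ := hkodd
  subst hj
  rw [pow_succ, pow_mul, sq, ηC_sq ht, one_pow, one_mul]

lemma prod_eps_eta {k : ℕ} (i0 : Fin k) (hkodd : Odd k) {t : F} (ht : t ≠ 0) :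
    ∏ i : Fin k, ηC F ((if i = i0 then (-1 : F) else 1) * t)
      = ηC F (-1) * ηC F t := by
  have : ∀ i : Fin k, ηC F ((if i = i0 then (-1 : F) else 1) * t)
      = (if i = i0 then ηC F (-1) else 1) * ηC F t := by
    intro i
    split <;> rw [map_mul] <;> simp
  simp_rw [this]
  rw [Finset.prod_mul_distrib, Finset.prod_const, Finset.card_univ, Fintype.card_fin,
    Finset.prod_ite_eq' Finset.univ i0 (fun _ => ηC F (-1)), if_pos (Finset.mem_univ i0),
    ηC_pow_odd hkodd ht]

/-- The inner sum over `x` for a fixed nonzero `t`. -/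
lemma Ut (hq : Odd (Fintype.card F)) (χ : AddChar F ℂ) (hχ : χ ≠ 1)
    {k : ℕ} (hkodd : Odd k) (i0 : Fin k) (m : Fin k → F) {t : F} (ht : t ≠ 0) :
    ∑ x : Fin k → F,
        χ (t * (∑ i, (if i = i0 then (-1 : F) else 1) * x i ^ 2) + (-(∑ i, m i * x i)))
      = χ (-(∑ i, (if i = i0 then (-1 : F) else 1) * m i ^ 2) / (4 * t))
          * ((ηC F (-1) * ηC F t) * (∑ s : F, χ (s ^ 2)) ^ k) := by
  set ε : Fin k → F := fun i => if i = i0 then (-1 : F) else 1 with hε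
  have hεne : ∀ i, ε i ≠ 0 := by
    intro i
    show (if i = i0 then (-1 : F) else 1) ≠ 0
    split <;> simp
  have ha : ∀ i, ε i * t ≠ 0 := fun i => mul_ne_zero (hεne i) ht
  have h4 : (4 : F) ≠ 0 := four_ne_zero hq
  -- rewrite the argument as a sum over coordinates
  have harg : ∀ x : Fin k → F,
      t * (∑ i, ε i * x i ^ 2) + (-(∑ i, m i * x i))
        = ∑ i, ((ε i * t) * x i ^ 2 + (-(m i)) * x i) := by
    intro x
    rw [Finset.mul_sum, ← Finset.sum_neg_distrib, ← Finset.sum_add_distrib]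
    exact Finset.sum_congr rfl fun i _ => by ring
  simp only [show ∀ x : Fin k → F, t * (∑ i, (if i = i0 then (-1 : F) else 1) * x i ^ 2) + (-(∑ i, m i * x i)) = ∑ i, ((ε i * t) * x i ^ 2 + (-(m i)) * x i) from harg, map_sum']
  rw [show (∑ x : Fin k → F, ∏ i, χ ((ε i * t) * x i ^ 2 + (-(m i)) * x i))
      = ∑ x ∈ Fintype.piFinset (fun _ : Fin k => (Finset.univ : Finset F)),
          ∏ i, χ ((ε i * t) * x i ^ 2 + (-(m i)) * x i) by rw [Fintype.piFinset_univ],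
    ← Finset.prod_univ_sum (fun _ : Fin k => (Finset.univ : Finset F))
      (fun i y => χ ((ε i * t) * y ^ 2 + (-(m i)) * y))]
  have hfac : ∀ i : Fin k,
      ∑ y : F, χ ((ε i * t) * y ^ 2 + (-(m i)) * y)
        = χ (-(m i) ^ 2 / (4 * (ε i * t))) * (ηC F (ε i * t) * ∑ s : F, χ (s ^ 2)) := by
    intro i
    rw [complete_square hq χ hχ (ha i) (-(m i)), neg_sq]
  simp_rw [hfac]
  rw [Finset.prod_mul_distrib, Finset.prod_mul_distrib, ← map_sum', Finset.prod_const,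
    Finset.card_univ, Fintype.card_fin, prod_eps_eta i0 hkodd ht]
  congr 2
  rw [← Finset.sum_neg_distrib, Finset.sum_div]
  refine Finset.sum_congr rfl fun i _ => ?_
  by_cases h : i = i0
  · rw [show ε i = -1 by simp [hε, h]]
    field_simp
    rw [if_pos h]
    ring
  · rw [show ε i = 1 by simp [hε, h]]
    field_simp
    rw [if_neg h]
    ring

end Part3
set_option maxHeartbeats 2000000 in
/-- Fourier transform of the cone `C_k` in odd dimensions `k ≥ 3`:
`Ĉ_k(m) = q⁻¹δ₀(m) + q^{-k-1} η(Q(m)) G₁^{k+1}`, with the convention `η(0) = 0`. -/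
theorem cone_fourier_transform_odd {F : Type*} [Field F] [Fintype F] [DecidableEq F]
    (hq : Odd (Fintype.card F)) (χ : AddChar F ℂ) (hχ : χ ≠ 1)
    (k : ℕ) (hk : 3 ≤ k) (hkodd : Odd k)
    (m : Fin k → F) :
    ((Fintype.card F : ℂ) ^ k)⁻¹ *
        ∑ x ∈ Finset.univ.filter (fun x : Fin k → F =>
            -(x ⟨0, by omega⟩) ^ 2 + ∑ i ∈ Finset.univ.erase ⟨0, by omega⟩, (x i) ^ 2 = 0),
          χ (-(∑ i, m i * x i))
      = (Fintype.card F : ℂ)⁻¹ * (if m = 0 then 1 else 0)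
        + ((Fintype.card F : ℂ) ^ (k + 1))⁻¹ *
            ((quadraticChar F (-(m ⟨0, by omega⟩) ^ 2 +
                ∑ i ∈ Finset.univ.erase ⟨0, by omega⟩, (m i) ^ 2) : ℤ) : ℂ) *
            (∑ s : F, χ (s ^ 2)) ^ (k + 1) := by
  have hk0 : 0 < k := by omega
  have hq0 : (Fintype.card F : ℂ) ≠ 0 := Nat.cast_ne_zero.mpr Fintype.card_ne_zero
  have h2 : (2 : F) ≠ 0 := Ring.two_ne_zero (ConeAux.char_ne_two hq)
  show ((Fintype.card F : ℂ) ^ k)⁻¹ *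
        ∑ x ∈ Finset.univ.filter (fun x : Fin k → F =>
            -(x ⟨0, hk0⟩) ^ 2 + ∑ i ∈ Finset.univ.erase (⟨0, hk0⟩ : Fin k), (x i) ^ 2 = 0),
          χ (-(∑ i, m i * x i))
      = (Fintype.card F : ℂ)⁻¹ * (if m = 0 then 1 else 0)
        + ((Fintype.card F : ℂ) ^ (k + 1))⁻¹ *
            ((quadraticChar F (-(m ⟨0, hk0⟩) ^ 2 +
                ∑ i ∈ Finset.univ.erase (⟨0, hk0⟩ : Fin k), (m i) ^ 2) : ℤ) : ℂ) *
            (∑ s : F, χ (s ^ 2)) ^ (k + 1)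
  have hQ : ∀ v : Fin k → F,
      -(v ⟨0, hk0⟩) ^ 2 + ∑ i ∈ Finset.univ.erase (⟨0, hk0⟩ : Fin k), (v i) ^ 2
        = ∑ i, (if i = (⟨0, hk0⟩ : Fin k) then (-1 : F) else 1) * v i ^ 2 := by
    intro v
    rw [← Finset.add_sum_erase Finset.univ
        (fun i => (if i = (⟨0, hk0⟩ : Fin k) then (-1 : F) else 1) * v i ^ 2)
        (Finset.mem_univ (⟨0, hk0⟩ : Fin k))]
    congr 1
    · rw [if_pos rfl]; ring
    · exact Finset.sum_congr rfl fun i hi => by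
        rw [if_neg (Finset.mem_erase.mp hi).1, one_mul]
  have hfilter : (Finset.univ.filter fun x : Fin k → F =>
        -(x ⟨0, hk0⟩) ^ 2 + ∑ i ∈ Finset.univ.erase (⟨0, hk0⟩ : Fin k), (x i) ^ 2 = 0)
      = Finset.univ.filter (fun x : Fin k → F =>
        ∑ i, (if i = (⟨0, hk0⟩ : Fin k) then (-1 : F) else 1) * x i ^ 2 = 0) := by
    apply Finset.filter_congr
    intro x _
    rw [hQ x]
  rw [hfilter, hQ m,
    show ((quadraticChar F (∑ i, (if i = (⟨0, hk0⟩ : Fin k) then (-1 : F) else 1) * m i ^ 2)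
        : ℤ) : ℂ) = ConeAux.ηC F (∑ i, (if i = (⟨0, hk0⟩ : Fin k) then (-1 : F) else 1) * m i ^ 2)
      from (ConeAux.ηC_apply _).symm]
  -- abbreviations (purely notational in the text below)
  have key : (Fintype.card F : ℂ) *
      ∑ x ∈ Finset.univ.filter (fun x : Fin k → F =>
          ∑ i, (if i = (⟨0, hk0⟩ : Fin k) then (-1 : F) else 1) * x i ^ 2 = 0),
        χ (-(∑ i, m i * x i))
      = (if m = 0 then ((Fintype.card F : ℂ)) ^ k else 0)
        + ConeAux.ηC F (∑ i, (if i = (⟨0, hk0⟩ : Fin k) then (-1 : F) else 1) * m i ^ 2)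
          * (∑ s : F, χ (s ^ 2)) ^ (k + 1) := by
    have hswap : ∑ t : F, ∑ x : Fin k → F,
        χ (t * (∑ i, (if i = (⟨0, hk0⟩ : Fin k) then (-1 : F) else 1) * x i ^ 2)
          + (-(∑ i, m i * x i)))
        = (Fintype.card F : ℂ) *
          ∑ x ∈ Finset.univ.filter (fun x : Fin k → F =>
              ∑ i, (if i = (⟨0, hk0⟩ : Fin k) then (-1 : F) else 1) * x i ^ 2 = 0),
            χ (-(∑ i, m i * x i)) := by
      rw [Finset.sum_comm]
      calc ∑ x : Fin k → F, ∑ t : F,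
            χ (t * (∑ i, (if i = (⟨0, hk0⟩ : Fin k) then (-1 : F) else 1) * x i ^ 2)
              + (-(∑ i, m i * x i)))
          = ∑ x : Fin k → F,
              (∑ t : F, χ (t * (∑ i, (if i = (⟨0, hk0⟩ : Fin k) then (-1 : F) else 1) * x i ^ 2)))
                * χ (-(∑ i, m i * x i)) := by
            refine Finset.sum_congr rfl fun x _ => ?_
            rw [Finset.sum_mul]
            exact Finset.sum_congr rfl fun t _ => AddChar.map_add_eq_mul χ _ _
        _ = ∑ x : Fin k → F,
              (if (∑ i, (if i = (⟨0, hk0⟩ : Fin k) then (-1 : F) else 1) * x i ^ 2) = 0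
                then (Fintype.card F : ℂ) else 0) * χ (-(∑ i, m i * x i)) := by
            refine Finset.sum_congr rfl fun x _ => ?_
            congr 1
            calc ∑ t : F, χ (t * (∑ i, (if i = (⟨0, hk0⟩ : Fin k) then (-1 : F) else 1) * x i ^ 2))
                = ∑ t : F, χ ((∑ i, (if i = (⟨0, hk0⟩ : Fin k) then (-1 : F) else 1) * x i ^ 2) * t) :=
                  Finset.sum_congr rfl fun t _ => by rw [mul_comm]
              _ = _ := ConeAux.sum_mul_eq χ hχ _
        _ = ∑ x ∈ Finset.univ.filter (fun x : Fin k → F =>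
                ∑ i, (if i = (⟨0, hk0⟩ : Fin k) then (-1 : F) else 1) * x i ^ 2 = 0),
              (Fintype.card F : ℂ) * χ (-(∑ i, m i * x i)) := by
            rw [Finset.sum_filter]
            refine Finset.sum_congr rfl fun x _ => ?_
            split <;> simp
        _ = _ := by rw [← Finset.mul_sum]
    rw [← hswap, ← Finset.add_sum_erase Finset.univ _ (Finset.mem_univ (0 : F))]
    congr 1
    · -- t = 0 term
      calc ∑ x : Fin k → F,
            χ ((0 : F) * (∑ i, (if i = (⟨0, hk0⟩ : Fin k) then (-1 : F) else 1) * x i ^ 2)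
              + (-(∑ i, m i * x i)))
          = ∑ x : Fin k → F, χ (-(∑ i, m i * x i)) := by
            refine Finset.sum_congr rfl fun x _ => ?_
            rw [zero_mul, zero_add]
        _ = _ := Part2.sum_delta χ hχ m
    · -- t ≠ 0 terms
      calc ∑ t ∈ Finset.univ.erase (0 : F), ∑ x : Fin k → F,
            χ (t * (∑ i, (if i = (⟨0, hk0⟩ : Fin k) then (-1 : F) else 1) * x i ^ 2)
              + (-(∑ i, m i * x i)))
          = ∑ t ∈ Finset.univ.erase (0 : F),
              (ConeAux.ηC F (-1) * (∑ s : F, χ (s ^ 2)) ^ k) *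
                (ConeAux.ηC F t *
                  χ ((-(∑ i, (if i = (⟨0, hk0⟩ : Fin k) then (-1 : F) else 1) * m i ^ 2) / 4) * t⁻¹)) := by
            refine Finset.sum_congr rfl fun t ht => ?_
            have ht0 : t ≠ 0 := (Finset.mem_erase.mp ht).1
            rw [Part3.Ut hq χ hχ hkodd (⟨0, hk0⟩ : Fin k) m ht0]
            rw [show -(∑ i, (if i = (⟨0, hk0⟩ : Fin k) then (-1 : F) else 1) * m i ^ 2) / (4 * t)
                = (-(∑ i, (if i = (⟨0, hk0⟩ : Fin k) then (-1 : F) else 1) * m i ^ 2) / 4) * t⁻¹ by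
              rw [div_eq_mul_inv, mul_inv, div_eq_mul_inv, mul_assoc]]
            ring
        _ = (ConeAux.ηC F (-1) * (∑ s : F, χ (s ^ 2)) ^ k) *
              (ConeAux.ηC F (-(∑ i, (if i = (⟨0, hk0⟩ : Fin k) then (-1 : F) else 1) * m i ^ 2) / 4)
                * ∑ s : F, χ (s ^ 2)) := by
            rw [← Finset.mul_sum, Part2.sum_eta_inv hq χ hχ _]
        _ = _ := by
            have heta : ConeAux.ηC F (-1) *
                ConeAux.ηC F (-(∑ i, (if i = (⟨0, hk0⟩ : Fin k) then (-1 : F) else 1) * m i ^ 2) / 4)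
                = ConeAux.ηC F (∑ i, (if i = (⟨0, hk0⟩ : Fin k) then (-1 : F) else 1) * m i ^ 2) := by
              have h2i : (2 : F)⁻¹ ≠ 0 := inv_ne_zero h2
              have hre : -(∑ i, (if i = (⟨0, hk0⟩ : Fin k) then (-1 : F) else 1) * m i ^ 2) / 4
                  = (-1) * ((∑ i, (if i = (⟨0, hk0⟩ : Fin k) then (-1 : F) else 1) * m i ^ 2)
                      * ((2 : F)⁻¹) ^ 2) := by
                have h4 : ((2 : F)⁻¹) ^ 2 = (4 : F)⁻¹ := by
                  rw [inv_pow]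
                  norm_num
                rw [h4]
                ring
              rw [hre, map_mul, map_mul, Part3.ηC_sq' h2i, mul_one, ← mul_assoc,
                ConeAux.ηC_sq (neg_ne_zero.mpr one_ne_zero), one_mul]
            rw [show (ConeAux.ηC F (-1) * (∑ s : F, χ (s ^ 2)) ^ k) *
                  (ConeAux.ηC F (-(∑ i, (if i = (⟨0, hk0⟩ : Fin k) then (-1 : F) else 1) * m i ^ 2) / 4) * ∑ s : F, χ (s ^ 2))
                = (ConeAux.ηC F (-1) * ConeAux.ηC F (-(∑ i, (if i = (⟨0, hk0⟩ : Fin k) then (-1 : F) else 1) * m i ^ 2) / 4))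
                    * ((∑ s : F, χ (s ^ 2)) ^ k * ∑ s : F, χ (s ^ 2)) from by ring,
              heta, ← pow_succ]
  have hS : (∑ x ∈ Finset.univ.filter (fun x : Fin k → F =>
        ∑ i, (if i = (⟨0, hk0⟩ : Fin k) then (-1 : F) else 1) * x i ^ 2 = 0),
      χ (-(∑ i, m i * x i)))
      = (Fintype.card F : ℂ)⁻¹ *
        ((if m = 0 then ((Fintype.card F : ℂ)) ^ k else 0)
          + ConeAux.ηC F (∑ i, (if i = (⟨0, hk0⟩ : Fin k) then (-1 : F) else 1) * m i ^ 2)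
            * (∑ s : F, χ (s ^ 2)) ^ (k + 1)) := by
    rw [← key, inv_mul_cancel_left₀ hq0]
  rw [hS]
  by_cases hm : m = 0
  · rw [if_pos hm, if_pos hm]
    field_simp
    ring
  · rw [if_neg hm, if_neg hm, zero_add, mul_zero, zero_add, pow_succ ((Fintype.card F : ℂ)) k, mul_inv]
    ring
end

section
/- For any m ∈ F_q^k, the Fourier transform of the zero sphere S_0 = {x ∈ F_q^k : ||x|| = 0} satisfies Ŝ_0(m) = q^{-1}δ_0(m) + q^{-k-1}·η^k(-1)·G_1^k·Σ_{r≠0} η^k(r)·χ(||m||/(4r)), where ||m|| = m_1² + ... + m_k². -/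
open Finset

section ZeroSphereAux

variable {F : Type*} [Field F] [Fintype F] [DecidableEq F]

omit [Fintype F] [DecidableEq F] in
lemma myAddChar_sum {ι : Type*} (χ : AddChar F ℂ) (s : Finset ι) (f : ι → F) :
    χ (∑ i ∈ s, f i) = ∏ i ∈ s, χ (f i) := by
  classical
  induction s using Finset.cons_induction with
  | empty => simp
  | cons a s ha ih => rw [Finset.sum_cons, Finset.prod_cons, AddChar.map_add_eq_mul, ih]

lemma my_sum_mulShift (χ : AddChar F ℂ) (hχ : χ ≠ 1) (b : F) :
    ∑ x : F, χ (x * b) = if b = 0 then (Fintype.card F : ℂ) else 0 := by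
  have := AddChar.sum_mulShift b (AddChar.IsPrimitive.of_ne_one hχ)
  simpa using this

lemma my_pi_sum (χ : AddChar F ℂ) (k : ℕ) (g : Fin k → F → F) :
    ∑ x : Fin k → F, χ (∑ i, g i (x i)) = ∏ i, ∑ t : F, χ (g i t) := by
  rw [Fintype.prod_sum]
  exact Finset.sum_congr rfl fun x _ => myAddChar_sum χ univ _

lemma my_gauss (hF : ringChar F ≠ 2) (χ : AddChar F ℂ) (hχ : χ ≠ 1) {r : F} (hr : r ≠ 0) :
    ∑ s : F, χ (r * s ^ 2)
      = ((quadraticChar F r : ℤ) : ℂ) * ∑ u : F, ((quadraticChar F u : ℤ) : ℂ) * χ u := by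
  have h1 : ∑ s : F, χ (r * s ^ 2)
      = ∑ u : F, ∑ s ∈ univ.filter (fun s : F => s ^ 2 = u), χ (r * u) :=
    (Finset.sum_fiberwise_of_maps_to' (fun i _ => mem_univ _) (fun u => χ (r * u))).symm
  have hcard : ∀ u : F, ((univ.filter (fun s : F => s ^ 2 = u)).card : ℂ)
      = ((quadraticChar F u : ℤ) : ℂ) + 1 := by
    intro u
    have := quadraticChar_card_sqrts hF u
    rw [show {x : F | x ^ 2 = u}.toFinset = univ.filter (fun s : F => s ^ 2 = u) by
      ext x; simp] at this
    exact_mod_cast congrArg (Int.cast : ℤ → ℂ) this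
  rw [h1]
  have h2 : ∀ u : F, ∑ s ∈ univ.filter (fun s : F => s ^ 2 = u), χ (r * u)
      = (((quadraticChar F u : ℤ) : ℂ) + 1) * χ (r * u) := by
    intro u
    rw [Finset.sum_const, nsmul_eq_mul, hcard u]
  simp_rw [h2, add_mul, one_mul, Finset.sum_add_distrib]
  have h3 : ∑ u : F, χ (r * u) = 0 := by
    simp_rw [mul_comm r]
    rw [my_sum_mulShift χ hχ r, if_neg hr]
  rw [h3, add_zero]
  have hηr : ((quadraticChar F r : ℤ) : ℂ) * ((quadraticChar F r : ℤ) : ℂ) = 1 := by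
    have := quadraticChar_sq_one hr
    rw [← Int.cast_mul, ← sq, this]; norm_num
  have h4 : ∀ u : F, ((quadraticChar F u : ℤ) : ℂ)
      = ((quadraticChar F r : ℤ) : ℂ) * ((quadraticChar F (r * u) : ℤ) : ℂ) := by
    intro u
    rw [map_mul, Int.cast_mul, ← mul_assoc, hηr, one_mul]
  calc ∑ u : F, ((quadraticChar F u : ℤ) : ℂ) * χ (r * u)
      = ∑ u : F, ((quadraticChar F r : ℤ) : ℂ) *
          (((quadraticChar F (r * u) : ℤ) : ℂ) * χ (r * u)) := by
        refine Finset.sum_congr rfl fun u _ => ?_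
        rw [h4 u]; ring
    _ = ((quadraticChar F r : ℤ) : ℂ) *
          ∑ u : F, ((quadraticChar F (r * u) : ℤ) : ℂ) * χ (r * u) := by
        rw [Finset.mul_sum]
    _ = ((quadraticChar F r : ℤ) : ℂ) * ∑ v : F, ((quadraticChar F v : ℤ) : ℂ) * χ v := by
        congr 1
        exact Fintype.sum_equiv (Equiv.mulLeft₀ r hr) _ _ (fun u => rfl)

lemma my_quad_sum (hF : ringChar F ≠ 2) (χ : AddChar F ℂ) (hχ : χ ≠ 1) {r : F} (hr : r ≠ 0) :
    ∑ s : F, χ (r * s ^ 2) = ((quadraticChar F r : ℤ) : ℂ) * ∑ s : F, χ (s ^ 2) := by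
  rw [my_gauss hF χ hχ hr]
  congr 1
  have := my_gauss hF χ hχ (one_ne_zero (α := F))
  simp only [one_mul, MulChar.map_one] at this ⊢
  rw [this]
  norm_num

lemma my_one_var (hF : ringChar F ≠ 2) (χ : AddChar F ℂ) (hχ : χ ≠ 1) {r : F} (hr : r ≠ 0)
    (a : F) :
    ∑ t : F, χ (r * t ^ 2 + a * t)
      = ((quadraticChar F r : ℤ) : ℂ) * (∑ s : F, χ (s ^ 2)) * χ (-(a ^ 2) / (4 * r)) := by
  have h2 : (2 : F) ≠ 0 := Ring.two_ne_zero hF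
  have h4 : (4 : F) ≠ 0 := by
    intro h
    have h' : (2 : F) * 2 = 0 := by rw [show (2:F)*2 = 4 by norm_num, h]
    rcases mul_eq_zero.mp h' with h'' | h'' <;> exact h2 h''
  have key : ∑ t : F, χ (r * t ^ 2 + a * t) = ∑ s : F, χ (r * s ^ 2 + -(a ^ 2) / (4 * r)) := by
    refine (Fintype.sum_equiv (Equiv.subRight (a / (2 * r))) _ _ fun s => ?_).symm
    congr 1
    simp only [Equiv.subRight_apply]
    set c := a / (2 * r) with hc
    have ha : a = 2 * r * c := by rw [hc]; field_simp
    rw [ha]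
    have hd : -((2 * r * c) ^ 2) / (4 * r) = -(r * c ^ 2) := by
      rw [div_eq_iff (mul_ne_zero h4 hr : (4:F) * r ≠ 0)]
      ring
    rw [hd]
    ring
  rw [key]
  simp_rw [AddChar.map_add_eq_mul]
  rw [← Finset.sum_mul, my_quad_sum hF χ hχ hr]

end ZeroSphereAux

/-- General Fourier transform formula for the zero sphere `S₀ = {x : ‖x‖ = 0}` in `F_q^k`:
`Ŝ₀(m) = q⁻¹δ₀(m) + q^{-k-1} η^k(-1) G₁^k ∑_{r ≠ 0} η^k(r) χ(‖m‖/(4r))`. -/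
theorem zero_sphere_fourier_transform_general {F : Type*} [Field F] [Fintype F] [DecidableEq F]
    (hq : Odd (Fintype.card F)) (χ : AddChar F ℂ) (hχ : χ ≠ 1)
    (k : ℕ) (m : Fin k → F) :
    ((Fintype.card F : ℂ) ^ k)⁻¹ *
        ∑ x ∈ Finset.univ.filter (fun x : Fin k → F => ∑ i, (x i) ^ 2 = 0),
          χ (-(∑ i, m i * x i))
      = (Fintype.card F : ℂ)⁻¹ * (if m = 0 then 1 else 0)
        + ((Fintype.card F : ℂ) ^ (k + 1))⁻¹ * ((quadraticChar F (-1) : ℤ) : ℂ) ^ k *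
            (∑ s : F, χ (s ^ 2)) ^ k *
            ∑ r ∈ Finset.univ \ {(0 : F)},
              ((quadraticChar F r : ℤ) : ℂ) ^ k * χ ((∑ i, (m i) ^ 2) / (4 * r)) := by
  have hF2 : ringChar F ≠ 2 := by
    intro h
    have := FiniteField.even_card_of_char_two h
    rw [Nat.odd_iff] at hq
    omega
  have hq0 : (Fintype.card F : ℂ) ≠ 0 := Nat.cast_ne_zero.mpr Fintype.card_ne_zero
  set G : ℂ := ∑ s : F, χ (s ^ 2) with hG
  set S : ℂ := ∑ x ∈ Finset.univ.filter (fun x : Fin k → F => ∑ i, (x i) ^ 2 = 0),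
      χ (-(∑ i, m i * x i)) with hS
  set D : ℂ := if m = 0 then 1 else 0 with hD
  set T : ℂ := ∑ r ∈ Finset.univ \ {(0 : F)},
      ((quadraticChar F r : ℤ) : ℂ) ^ k * χ ((∑ i, (m i) ^ 2) / (4 * r)) with hT
  -- the `r = 0` term
  have key0 : ∑ x : Fin k → F, χ (-(∑ i, m i * x i)) = (Fintype.card F : ℂ) ^ k * D := by
    have hx : ∀ x : Fin k → F, -(∑ i, m i * x i) = ∑ i, (x i) * (-(m i)) := by
      intro x
      rw [← Finset.sum_neg_distrib]
      exact Finset.sum_congr rfl fun i _ => by ring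
    simp only [hx]
    rw [my_pi_sum χ k (fun i t => t * (-(m i)))]
    have hfac : ∀ i, (∑ t : F, χ (t * (-(m i))))
        = if m i = 0 then (Fintype.card F : ℂ) else 0 := by
      intro i
      rw [my_sum_mulShift χ hχ]
      simp only [neg_eq_zero]
    simp only [hfac]
    by_cases hm : m = 0
    · simp [hm, hD, Finset.prod_const]
    · rw [hD, if_neg hm, mul_zero]
      obtain ⟨i, hi⟩ : ∃ i, m i ≠ 0 := by
        by_contra h
        push_neg at h
        exact hm (funext h)
      exact Finset.prod_eq_zero (mem_univ i) (by rw [if_neg hi])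
  -- the `r ≠ 0` terms
  have key1 : ∀ r : F, r ≠ 0 →
      ∑ x : Fin k → F, χ (r * (∑ i, (x i) ^ 2) + -(∑ i, m i * x i))
        = ((quadraticChar F r : ℤ) : ℂ) ^ k * G ^ k * χ (-(∑ i, (m i) ^ 2) / (4 * r)) := by
    intro r hr
    have hx : ∀ x : Fin k → F, r * (∑ i, (x i) ^ 2) + -(∑ i, m i * x i)
        = ∑ i, (r * (x i) ^ 2 + (-(m i)) * (x i)) := by
      intro x
      rw [Finset.sum_add_distrib, Finset.mul_sum, ← Finset.sum_neg_distrib]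
      congr 1
      exact Finset.sum_congr rfl fun i _ => by ring
    simp only [hx]
    rw [my_pi_sum χ k (fun i t => r * t ^ 2 + (-(m i)) * t)]
    have hfac : ∀ i : Fin k, (∑ t : F, χ (r * t ^ 2 + (-(m i)) * t))
        = ((quadraticChar F r : ℤ) : ℂ) * G * χ (-((m i) ^ 2) / (4 * r)) := by
      intro i
      rw [my_one_var hF2 χ hχ hr (-(m i)), neg_sq, hG]
    simp only [hfac]
    rw [Finset.prod_mul_distrib, Finset.prod_mul_distrib, Finset.prod_const,
      Finset.prod_const, card_univ, Fintype.card_fin]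
    congr 1
    rw [← myAddChar_sum]
    congr 1
    rw [← Finset.sum_div, Finset.sum_neg_distrib]
  -- the substitution `r ↦ -r`
  have key3 : ∑ r ∈ Finset.univ \ {(0 : F)},
      ((quadraticChar F r : ℤ) : ℂ) ^ k * G ^ k * χ (-(∑ i, (m i) ^ 2) / (4 * r))
      = ((quadraticChar F (-1) : ℤ) : ℂ) ^ k * G ^ k * T := by
    rw [hT, Finset.mul_sum]
    refine Finset.sum_nbij' (fun r => -r) (fun r => -r) ?_ ?_ ?_ ?_ ?_
    · intro a ha
      simp only [Finset.mem_sdiff, Finset.mem_univ, Finset.mem_singleton, neg_eq_zero] at ha ⊢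
      exact ⟨trivial, ha.2⟩
    · intro a ha
      simp only [Finset.mem_sdiff, Finset.mem_univ, Finset.mem_singleton, neg_eq_zero] at ha ⊢
      exact ⟨trivial, ha.2⟩
    · intro a _; simp
    · intro a _; simp
    · intro a ha
      have hmul : ((quadraticChar F (-1) : ℤ) : ℂ) * ((quadraticChar F (-a) : ℤ) : ℂ)
          = ((quadraticChar F a : ℤ) : ℂ) := by
        rw [← Int.cast_mul, ← map_mul, neg_mul_neg, one_mul]
      have harg : (∑ i, (m i) ^ 2) / (4 * (-a)) = (-(∑ i, (m i) ^ 2)) / (4 * a) := by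
        rw [mul_neg, div_neg, neg_div]
      calc ((quadraticChar F a : ℤ) : ℂ) ^ k * G ^ k * χ ((-(∑ i, (m i) ^ 2)) / (4 * a))
          = (((quadraticChar F (-1) : ℤ) : ℂ) * ((quadraticChar F (-a) : ℤ) : ℂ)) ^ k
              * G ^ k * χ ((∑ i, (m i) ^ 2) / (4 * (-a))) := by rw [hmul, harg]
        _ = ((quadraticChar F (-1) : ℤ) : ℂ) ^ k * G ^ k *
              (((quadraticChar F (-a) : ℤ) : ℂ) ^ k * χ ((∑ i, (m i) ^ 2) / (4 * (-a)))) := by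
            rw [mul_pow]; ring
  -- the key identity
  have key : (Fintype.card F : ℂ) * S
      = (Fintype.card F : ℂ) ^ k * D
        + ((quadraticChar F (-1) : ℤ) : ℂ) ^ k * G ^ k * T := by
    have swap : ∑ r : F, ∑ x : Fin k → F, χ (r * (∑ i, (x i) ^ 2) + -(∑ i, m i * x i))
        = (Fintype.card F : ℂ) * S := by
      rw [Finset.sum_comm]
      have hin : ∀ x : Fin k → F,
          ∑ r : F, χ (r * (∑ i, (x i) ^ 2) + -(∑ i, m i * x i))
          = (if (∑ i, (x i) ^ 2) = 0 then (Fintype.card F : ℂ) else 0)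
              * χ (-(∑ i, m i * x i)) := by
        intro x
        simp_rw [AddChar.map_add_eq_mul, ← Finset.sum_mul]
        congr 1
        exact my_sum_mulShift χ hχ _
      simp only [hin]
      rw [hS, Finset.mul_sum, Finset.sum_filter]
      exact Finset.sum_congr rfl fun x _ => by split <;> simp
    rw [← swap, Finset.sum_eq_sum_sdiff_singleton_add (Finset.mem_univ (0 : F))]
    have h0 : ∑ x : Fin k → F, χ ((0 : F) * (∑ i, (x i) ^ 2) + -(∑ i, m i * x i))
        = (Fintype.card F : ℂ) ^ k * D := by
      simp only [zero_mul, zero_add]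
      exact key0
    rw [h0, add_comm]
    congr 1
    rw [← key3]
    refine Finset.sum_congr rfl fun r hr => ?_
    have : r ≠ 0 := by
      simp only [Finset.mem_sdiff, Finset.mem_singleton] at hr
      exact hr.2
    exact key1 r this
  -- conclude
  refine mul_left_cancel₀ (pow_ne_zero (k + 1) hq0) ?_
  have l1 : (Fintype.card F : ℂ) ^ (k + 1) * (((Fintype.card F : ℂ) ^ k)⁻¹ * S)
      = (Fintype.card F : ℂ) * S := by
    rw [pow_succ]
    field_simp
  have l2 : (Fintype.card F : ℂ) ^ (k + 1) *
      ((Fintype.card F : ℂ)⁻¹ * D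
        + ((Fintype.card F : ℂ) ^ (k + 1))⁻¹ * ((quadraticChar F (-1) : ℤ) : ℂ) ^ k * G ^ k * T)
      = (Fintype.card F : ℂ) ^ k * D
        + ((quadraticChar F (-1) : ℤ) : ℂ) ^ k * G ^ k * T := by
    rw [mul_add]
    congr 1
    · rw [pow_succ]
      field_simp
    · field_simp
  rw [l1, l2]
  exact key
end

section
/- Let q ≡ 3 mod 4 and k ≡ 0 mod 4. Let G be the Cayley graph on vertex set F_q^k where x ~ y iff Q(x-y) = 0 with Q(z) = -z_1² + z_2² + ... + z_k². Then every eigenvalue of the adjacency matrix of G other than the trivial eigenvalue |C_k| - associated to the all-ones eigenvector - is either q^{(k-2)/2} or q^{(k-2)/2} - q^{k/2}; in particular, the only positive nontrivial eigenvalue is q^{(k-2)/2}. -/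
set_option maxHeartbeats 1000000
set_option linter.unusedSectionVars false


open Finset Matrix AddChar

/-! Auxiliary material for the proof. -/

section Aux

private lemma addChar_map_finsum {A M : Type*} [AddCommMonoid A] [CommMonoid M]
    (ψ : AddChar A M) {ι : Type*} (s : Finset ι) (f : ι → A) :
    ψ (∑ i ∈ s, f i) = ∏ i ∈ s, ψ (f i) := by
  classical
  induction s using Finset.induction_on with
  | empty => simp
  | @insert _ _ h ih =>
      rw [Finset.sum_insert h, Finset.prod_insert h, AddChar.map_add_eq_mul, ih]

variable {F : Type*} [Field F] [Fintype F] [DecidableEq F]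

private lemma sum_dot_eq_zero {k : ℕ} (ψ : AddChar F ℂ) (hψ : ψ.IsPrimitive)
    {a : Fin k → F} (ha : a ≠ 0) :
    ∑ z : Fin k → F, ψ (a ⬝ᵥ z) = 0 := by
  obtain ⟨i, hi⟩ := Function.ne_iff.mp ha
  obtain ⟨u, hu⟩ := AddChar.ne_one_iff.mp (hψ hi)
  rw [AddChar.mulShift_apply] at hu
  have hfw : ψ (a ⬝ᵥ Pi.single i u) ≠ 1 := by
    rw [dotProduct_single]; exact hu
  refine eq_zero_of_mul_eq_self_left hfw ?_
  rw [Finset.mul_sum]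
  calc ∑ z : Fin k → F, ψ (a ⬝ᵥ Pi.single i u) * ψ (a ⬝ᵥ z)
      = ∑ z : Fin k → F, ψ (a ⬝ᵥ (Pi.single i u + z)) := by
        refine Finset.sum_congr rfl fun z _ => ?_
        rw [dotProduct_add, AddChar.map_add_eq_mul]
    _ = ∑ z : Fin k → F, ψ (a ⬝ᵥ z) :=
        Fintype.sum_bijective _ (AddGroup.addLeft_bijective (Pi.single i u)) _ _ fun z => rfl

private lemma sum_dot_eq_zero' {k : ℕ} (ψ : AddChar F ℂ) (hψ : ψ.IsPrimitive)
    {d : Fin k → F} (hd : d ≠ 0) :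
    ∑ a : Fin k → F, ψ (a ⬝ᵥ d) = 0 := by
  have h : ∀ a : Fin k → F, (a ⬝ᵥ d) = (d ⬝ᵥ a) := fun a => dotProduct_comm a d
  simp_rw [h]
  exact sum_dot_eq_zero ψ hψ hd

/-- The quadratic character of `F` with values in `ℂ`. -/
private noncomputable def qchar (F : Type*) [Field F] [Fintype F] [DecidableEq F] :
    MulChar F ℂ :=
  (quadraticChar F).ringHomComp (Int.castRingHom ℂ)

private lemma qchar_ne_one (hF2 : ringChar F ≠ 2) : qchar F ≠ 1 :=
  (MulChar.ringHomComp_ne_one_iff Int.cast_injective).mpr (quadraticChar_ne_one hF2)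

private lemma qchar_quadratic : (qchar F).IsQuadratic :=
  (quadraticChar_isQuadratic F).comp _

private lemma qchar_sq_one {b : F} (hb : b ≠ 0) : qchar F b ^ 2 = 1 := by
  rw [qchar, MulChar.ringHomComp_apply]
  have h : ((Int.castRingHom ℂ) (quadraticChar F b)) = ((quadraticChar F b : ℤ) : ℂ) := rfl
  rw [h, show ((quadraticChar F b : ℤ) : ℂ) ^ 2 = (((quadraticChar F b) ^ 2 : ℤ) : ℂ) by
    push_cast; ring, quadraticChar_sq_one hb, Int.cast_one]

private lemma ringChar_ne_two (hq : Fintype.card F % 4 = 3) : ringChar F ≠ 2 := fun h => by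
  have := FiniteField.even_card_of_char_two h; omega

private lemma qchar_neg_one (hq : Fintype.card F % 4 = 3) : qchar F (-1) = -1 := by
  rw [qchar, MulChar.ringHomComp_apply, quadraticChar_neg_one (ringChar_ne_two hq),
    ZMod.χ₄_nat_three_mod_four hq]
  norm_num

private lemma sum_psi_sq (ψ : AddChar F ℂ) (hψ : ψ.IsPrimitive) (hF2 : ringChar F ≠ 2)
    {b : F} (hb : b ≠ 0) :
    ∑ u : F, ψ (b * u ^ 2) = qchar F b * gaussSum (qchar F) ψ := by
  have hfib : ∑ u : F, ψ (b * u ^ 2)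
      = ∑ v : F, ∑ u ∈ univ.filter (fun u => u ^ 2 = v), ψ (b * u ^ 2) :=
    (Finset.sum_fiberwise univ (fun u => u ^ 2) _).symm
  have hin : ∀ v : F, ∑ u ∈ univ.filter (fun u => u ^ 2 = v), ψ (b * u ^ 2)
      = ((quadraticChar F v : ℤ) : ℂ) * ψ (b * v) + ψ (b * v) := by
    intro v
    rw [Finset.sum_congr rfl (fun u hu => by rw [(Finset.mem_filter.mp hu).2]),
      Finset.sum_const, nsmul_eq_mul]
    have hcard := quadraticChar_card_sqrts hF2 v
    rw [Set.toFinset_setOf] at hcard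
    have : ((univ.filter (fun x : F => x ^ 2 = v)).card : ℂ)
        = ((quadraticChar F v : ℤ) : ℂ) + 1 := by exact_mod_cast hcard
    rw [this]; ring
  have hzero : ∑ v : F, ψ (b * v) = 0 := by
    have h := AddChar.sum_eq_zero_of_ne_one (hψ hb)
    simpa [AddChar.mulShift_apply] using h
  have hgs : ∑ v : F, ((quadraticChar F v : ℤ) : ℂ) * ψ (b * v)
      = gaussSum (qchar F) (ψ.mulShift b) := by
    simp [gaussSum, AddChar.mulShift_apply, qchar, MulChar.ringHomComp_apply]
  have hkey : ∑ u : F, ψ (b * u ^ 2) = gaussSum (qchar F) (ψ.mulShift b) := by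
    rw [hfib, Finset.sum_congr rfl fun v _ => hin v, Finset.sum_add_distrib, hzero, add_zero, hgs]
  have hmul := gaussSum_mulShift (qchar F) ψ (Units.mk0 b hb)
  simp only [Units.val_mk0] at hmul
  rw [hkey]
  calc gaussSum (qchar F) (ψ.mulShift b)
      = qchar F b ^ 2 * gaussSum (qchar F) (ψ.mulShift b) := by rw [qchar_sq_one hb, one_mul]
    _ = qchar F b * (qchar F b * gaussSum (qchar F) (ψ.mulShift b)) := by ring
    _ = qchar F b * gaussSum (qchar F) ψ := by rw [hmul]

private lemma sum_psi_quad (ψ : AddChar F ℂ) (hψ : ψ.IsPrimitive) (hF2 : ringChar F ≠ 2)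
    {b : F} (hb : b ≠ 0) (c : F) :
    ∑ u : F, ψ (b * u ^ 2 + c * u)
      = qchar F b * gaussSum (qchar F) ψ * ψ (-(c ^ 2 / (4 * b))) := by
  have h2 : (2 : F) ≠ 0 := Ring.two_ne_zero hF2
  have h4 : (4 : F) ≠ 0 := by
    have h : (4 : F) = 2 * 2 := by norm_num
    rw [h]; exact mul_ne_zero h2 h2
  have key : ∀ u : F, b * u ^ 2 + c * u = b * (u + c / (2 * b)) ^ 2 + -(c ^ 2 / (4 * b)) := by
    intro u; field_simp; ring
  calc ∑ u : F, ψ (b * u ^ 2 + c * u)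
      = ∑ u : F, ψ (b * (u + c / (2 * b)) ^ 2) * ψ (-(c ^ 2 / (4 * b))) := by
        refine Finset.sum_congr rfl fun u _ => ?_
        rw [key u, AddChar.map_add_eq_mul]
    _ = (∑ u : F, ψ (b * u ^ 2)) * ψ (-(c ^ 2 / (4 * b))) := by
        rw [← Finset.sum_mul]
        congr 1
        exact Fintype.sum_equiv (Equiv.addRight (c / (2 * b))) _ _ fun u => rfl
    _ = qchar F b * gaussSum (qchar F) ψ * ψ (-(c ^ 2 / (4 * b))) := by
        rw [sum_psi_sq ψ hψ hF2 hb]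

/-- The coefficient vector of the quadratic form. -/
private def cvec (F : Type*) [Field F] (k : ℕ) : Fin k → F :=
  fun i => if (i : ℕ) = 0 then -1 else 1

/-- The quadratic form `Q`. -/
private def Qc {F : Type*} [Field F] {k : ℕ} (z : Fin k → F) : F :=
  ∑ i, cvec F k i * z i ^ 2

private lemma cvec_cases {k : ℕ} (i : Fin k) : cvec F k i = -1 ∨ cvec F k i = 1 := by
  by_cases h : (i : ℕ) = 0 <;> simp [cvec, h]

private lemma cvec_ne_zero {k : ℕ} (i : Fin k) : cvec F k i ≠ 0 := by
  rcases cvec_cases (F := F) i with h | h <;> rw [h] <;> simp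

private lemma prod_cvec {k : ℕ} (hk : 0 < k) : ∏ i, cvec F k i = -1 := by
  have h : ∀ i : Fin k, cvec F k i = if i = (⟨0, hk⟩ : Fin k) then -1 else 1 := by
    intro i
    by_cases h : (i : ℕ) = 0 <;> simp [cvec, h, Fin.ext_iff]
  rw [Finset.prod_congr rfl fun i _ => h i, Finset.prod_ite_eq' univ (⟨0, hk⟩ : Fin k)
    (fun _ => (-1 : F)), if_pos (Finset.mem_univ _)]

private lemma sum_psi_quadform (hq : Fintype.card F % 4 = 3)
    (ψ : AddChar F ℂ) (hψ : ψ.IsPrimitive)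
    {k : ℕ} (hk : 0 < k) (hkeven : k % 2 = 0)
    {t : F} (ht : t ≠ 0) (a : Fin k → F) :
    ∑ z : Fin k → F, ψ (t * Qc z + a ⬝ᵥ z)
      = -((gaussSum (qchar F) ψ) ^ k * ψ (-(Qc a / (4 * t)))) := by
  have hF2 : ringChar F ≠ 2 := ringChar_ne_two hq
  have h2 : (2 : F) ≠ 0 := Ring.two_ne_zero hF2
  have h4 : (4 : F) ≠ 0 := by
    have h : (4 : F) = 2 * 2 := by norm_num
    rw [h]; exact mul_ne_zero h2 h2
  have hsummand : ∀ z : Fin k → F, t * Qc z + a ⬝ᵥ z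
      = ∑ i, (t * cvec F k i * z i ^ 2 + a i * z i) := by
    intro z
    rw [Qc, Finset.mul_sum, dotProduct, ← Finset.sum_add_distrib]
    exact Finset.sum_congr rfl fun i _ => by ring
  have hbi : ∀ i : Fin k, t * cvec F k i ≠ 0 := fun i => mul_ne_zero ht (cvec_ne_zero i)
  have hprod1 : (∏ i : Fin k, qchar F (t * cvec F k i)) = -1 := by
    rw [← _root_.map_prod (qchar F), Finset.prod_mul_distrib, Finset.prod_const, Finset.card_univ,
      Fintype.card_fin, prod_cvec hk, _root_.map_mul, _root_.map_pow, qchar_neg_one hq]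
    have hone : qchar F t ^ k = 1 := by
      obtain ⟨j, hj⟩ : ∃ j, k = 2 * j := ⟨k / 2, by omega⟩
      rw [hj, pow_mul, qchar_sq_one ht, one_pow]
    rw [hone, one_mul]
  have hptwise : ∀ i : Fin k, -(a i ^ 2 / (4 * (t * cvec F k i)))
      = -(cvec F k i * a i ^ 2) / (4 * t) := by
    intro i
    rcases cvec_cases (F := F) i with h | h <;> rw [h] <;> field_simp
  have hprod2 : (∏ i : Fin k, ψ (-(a i ^ 2 / (4 * (t * cvec F k i)))))
      = ψ (-(Qc a / (4 * t))) := by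
    rw [← addChar_map_finsum]
    congr 1
    calc ∑ i : Fin k, -(a i ^ 2 / (4 * (t * cvec F k i)))
        = ∑ i : Fin k, -(cvec F k i * a i ^ 2) / (4 * t) :=
          Finset.sum_congr rfl fun i _ => hptwise i
      _ = (∑ i : Fin k, -(cvec F k i * a i ^ 2)) / (4 * t) := (Finset.sum_div _ _ _).symm
      _ = -(Qc a) / (4 * t) := by rw [Finset.sum_neg_distrib]; rfl
      _ = -(Qc a / (4 * t)) := neg_div _ _
  have s1 : ∑ z : Fin k → F, ψ (t * Qc z + a ⬝ᵥ z)
      = ∑ z : Fin k → F, ∏ i, ψ (t * cvec F k i * z i ^ 2 + a i * z i) := by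
    refine Finset.sum_congr rfl fun z _ => ?_
    rw [hsummand z, addChar_map_finsum]
  have s2 : ∑ z : Fin k → F, ∏ i, ψ (t * cvec F k i * z i ^ 2 + a i * z i)
      = ∏ i : Fin k, ∑ u : F, ψ (t * cvec F k i * u ^ 2 + a i * u) :=
    (Fintype.prod_sum fun i u => ψ (t * cvec F k i * u ^ 2 + a i * u)).symm
  have s3 : ∏ i : Fin k, ∑ u : F, ψ (t * cvec F k i * u ^ 2 + a i * u)
      = ∏ i : Fin k, (qchar F (t * cvec F k i) * gaussSum (qchar F) ψ
          * ψ (-(a i ^ 2 / (4 * (t * cvec F k i))))) :=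
    Finset.prod_congr rfl fun i _ => sum_psi_quad ψ hψ hF2 (hbi i) (a i)
  have s4 : ∏ i : Fin k, (qchar F (t * cvec F k i) * gaussSum (qchar F) ψ
          * ψ (-(a i ^ 2 / (4 * (t * cvec F k i)))))
      = (∏ i : Fin k, qchar F (t * cvec F k i)) * (gaussSum (qchar F) ψ) ^ k
          * ∏ i : Fin k, ψ (-(a i ^ 2 / (4 * (t * cvec F k i)))) := by
    rw [Finset.prod_mul_distrib, Finset.prod_mul_distrib, Finset.prod_const,
      Finset.card_univ, Fintype.card_fin]
  rw [s1, s2, s3, s4, hprod1, hprod2]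
  ring

private lemma key_eigen (hq : Fintype.card F % 4 = 3)
    (ψ : AddChar F ℂ) (hψ : ψ.IsPrimitive)
    {k : ℕ} (hk : 0 < k) (hkeven : k % 2 = 0) {a : Fin k → F} (ha : a ≠ 0) :
    (Fintype.card F : ℂ) *
        ∑ z ∈ univ.filter (fun z : Fin k → F => Qc z = 0), ψ (a ⬝ᵥ z)
      = -((gaussSum (qchar F) ψ) ^ k)
          * (if Qc a = 0 then (Fintype.card F : ℂ) - 1 else -1) := by
  have hF2 : ringChar F ≠ 2 := ringChar_ne_two hq
  have h2 : (2 : F) ≠ 0 := Ring.two_ne_zero hF2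
  have h4 : (4 : F) ≠ 0 := by
    have h : (4 : F) = 2 * 2 := by norm_num
    rw [h]; exact mul_ne_zero h2 h2
  have hψne : ψ ≠ 1 := by
    have := hψ (one_ne_zero (α := F))
    rwa [AddChar.mulShift_one] at this
  have step1 : ∀ z : Fin k → F, (Fintype.card F : ℂ) * (if Qc z = 0 then ψ (a ⬝ᵥ z) else 0)
      = (∑ t : F, ψ (t * Qc z)) * ψ (a ⬝ᵥ z) := by
    intro z
    rw [AddChar.sum_mulShift _ hψ]
    split_ifs with h
    · push_cast; ring
    · push_cast; ring
  have hLHS : (Fintype.card F : ℂ) *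
      ∑ z ∈ univ.filter (fun z : Fin k → F => Qc z = 0), ψ (a ⬝ᵥ z)
      = ∑ t : F, ∑ z : Fin k → F, ψ (t * Qc z + a ⬝ᵥ z) := by
    rw [Finset.sum_filter, Finset.mul_sum, Finset.sum_congr rfl fun z _ => step1 z]
    simp_rw [Finset.sum_mul, ← AddChar.map_add_eq_mul]
    exact Finset.sum_comm
  rw [hLHS, ← Finset.add_sum_erase _ _ (Finset.mem_univ (0 : F))]
  have h0 : ∑ z : Fin k → F, ψ ((0 : F) * Qc z + a ⬝ᵥ z) = 0 := by
    simp_rw [zero_mul, zero_add]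
    exact sum_dot_eq_zero ψ hψ ha
  rw [h0, zero_add,
    Finset.sum_congr rfl fun t ht =>
      sum_psi_quadform hq ψ hψ hk hkeven (Finset.ne_of_mem_erase ht) a]
  simp_rw [neg_mul, Finset.sum_neg_distrib, ← Finset.mul_sum]
  congr 1
  by_cases hQa : Qc a = 0
  · rw [if_pos hQa]
    have hone : ∀ t ∈ univ.erase (0 : F), ψ (-(Qc a / (4 * t))) = (1 : ℂ) := by
      intro t _
      rw [hQa, zero_div, neg_zero, AddChar.map_zero_eq_one]
    rw [Finset.sum_congr rfl hone, Finset.sum_const,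
      Finset.card_erase_of_mem (Finset.mem_univ _), Finset.card_univ, nsmul_eq_mul, mul_one,
      Nat.cast_sub Fintype.card_pos, Nat.cast_one]
  · rw [if_neg hQa]
    have hmap : ∀ s : F, s ≠ 0 → -(Qc a / (4 * s)) ≠ 0 := fun s hs =>
      neg_ne_zero.mpr (div_ne_zero hQa (mul_ne_zero h4 hs))
    have hinv : ∀ s : F, s ≠ 0 → -(Qc a / (4 * -(Qc a / (4 * s)))) = s := by
      intro s hs
      field_simp
    have hbij : ∑ t ∈ univ.erase (0 : F), ψ (-(Qc a / (4 * t)))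
        = ∑ s ∈ univ.erase (0 : F), ψ s := by
      refine Finset.sum_nbij' (fun t => -(Qc a / (4 * t))) (fun s => -(Qc a / (4 * s)))
        ?_ ?_ ?_ ?_ ?_
      · intro t ht
        exact Finset.mem_erase.mpr ⟨hmap t (Finset.ne_of_mem_erase ht), Finset.mem_univ _⟩
      · intro s hs
        exact Finset.mem_erase.mpr ⟨hmap s (Finset.ne_of_mem_erase hs), Finset.mem_univ _⟩
      · intro t ht; exact hinv t (Finset.ne_of_mem_erase ht)
      · intro s hs; exact hinv s (Finset.ne_of_mem_erase hs)
      · intro t _; rfl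
    have hsum : ∑ s ∈ univ.erase (0 : F), ψ s = -1 := by
      have h := AddChar.sum_eq_zero_of_ne_one hψne
      rw [← Finset.add_sum_erase _ _ (Finset.mem_univ (0 : F)), AddChar.map_zero_eq_one] at h
      have := eq_neg_of_add_eq_zero_right h
      exact this
    rw [hbij, hsum]

end Aux

/-- For `q ≡ 3 mod 4` and `k ≡ 0 mod 4`, every eigenvalue of the adjacency matrix of the
Cayley graph on `F_q^k` with connection set the cone `C_k = {z : Q(z) = 0}`,
`Q(z) = -z₀² + z₁² + ⋯`, other than the trivial eigenvalue `|C_k|`, is either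
`q^{(k-2)/2}` or `q^{(k-2)/2} - q^{k/2}`. -/
theorem cone_cayley_graph_eigenvalues {F : Type*} [Field F] [Fintype F] [DecidableEq F]
    (hq : Fintype.card F % 4 = 3) (k : ℕ) (hk : 0 < k) (hk4 : k % 4 = 0)
    (M : Matrix (Fin k → F) (Fin k → F) ℂ)
    (hM : ∀ x y, M x y =
      if -(x ⟨0, hk⟩ - y ⟨0, hk⟩) ^ 2 +
          ∑ i ∈ Finset.univ.erase ⟨0, hk⟩, (x i - y i) ^ 2 = 0 then 1 else 0)
    (μ : ℂ) (hμ : μ ∈ spectrum ℂ M) :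
    μ = ((Finset.univ.filter (fun z : Fin k → F =>
            -(z ⟨0, hk⟩) ^ 2 + ∑ i ∈ Finset.univ.erase ⟨0, hk⟩, (z i) ^ 2 = 0)).card : ℂ)
    ∨ μ = (Fintype.card F : ℂ) ^ ((k - 2) / 2)
    ∨ μ = (Fintype.card F : ℂ) ^ ((k - 2) / 2) - (Fintype.card F : ℂ) ^ (k / 2) := by
  classical
  obtain ⟨m, hm, hm1⟩ : ∃ m, k = 4 * m ∧ 1 ≤ m := ⟨k / 4, by omega, by omega⟩
  have hkeven : k % 2 = 0 := by omega
  have hF2 : ringChar F ≠ 2 := ringChar_ne_two hq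
  set ψ := AddChar.FiniteField.primitiveChar_to_Complex F with hψdef
  have hψ : ψ.IsPrimitive := AddChar.FiniteField.primitiveChar_to_Complex_isPrimitive F
  set g := gaussSum (qchar F) ψ with hgdef
  -- the quadratic form rewriting
  have hQeq : ∀ z : Fin k → F,
      (-(z ⟨0, hk⟩) ^ 2 + ∑ i ∈ Finset.univ.erase ⟨0, hk⟩, (z i) ^ 2) = Qc z := by
    intro z
    rw [Qc, ← Finset.add_sum_erase _ _ (Finset.mem_univ (⟨0, hk⟩ : Fin k))]
    congr 1
    · show -(z ⟨0, hk⟩) ^ 2 = cvec F k ⟨0, hk⟩ * z ⟨0, hk⟩ ^ 2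
      simp [cvec]
    · refine Finset.sum_congr rfl fun i hi => ?_
      have hne : (i : ℕ) ≠ 0 := by
        have := (Finset.mem_erase.mp hi).1
        simpa [Fin.ext_iff] using this
      simp [cvec, hne]
  set lam : (Fin k → F) → ℂ :=
    fun a => ∑ z ∈ univ.filter (fun z : Fin k → F => Qc z = 0), ψ (a ⬝ᵥ z) with hlam
  set U : Matrix (Fin k → F) (Fin k → F) ℂ :=
    Matrix.of (fun x a => ψ (a ⬝ᵥ x)) with hU
  set W : Matrix (Fin k → F) (Fin k → F) ℂ :=
    Matrix.of (fun a y => ψ (-(a ⬝ᵥ y))) with hW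
  -- M * U = U * diagonal lam
  have hMU : M * U = U * Matrix.diagonal lam := by
    ext x a
    rw [Matrix.mul_apply, Matrix.mul_diagonal]
    calc ∑ y, M x y * U y a
        = ∑ z, M x (x + z) * U (x + z) a :=
          (Fintype.sum_equiv (Equiv.addLeft x) (fun z => M x (x + z) * U (x + z) a)
            (fun y => M x y * U y a) (fun z => rfl)).symm
      _ = ∑ z, (if Qc z = 0 then (1 : ℂ) else 0) * (U x a * ψ (a ⬝ᵥ z)) := by
          refine Finset.sum_congr rfl fun z _ => ?_
          have hcond : (-(x ⟨0, hk⟩ - (x + z) ⟨0, hk⟩) ^ 2 +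
              ∑ i ∈ Finset.univ.erase ⟨0, hk⟩, (x i - (x + z) i) ^ 2) = Qc z := by
            have e1 : ∀ i : Fin k, x i - (x + z) i = -(z i) := by
              intro i; simp only [Pi.add_apply]; ring
            simp_rw [e1, neg_sq]
            exact hQeq z
          rw [hM x (x + z)]
          simp only [hcond]
          congr 1
          show ψ (a ⬝ᵥ (x + z)) = ψ (a ⬝ᵥ x) * ψ (a ⬝ᵥ z)
          rw [dotProduct_add, AddChar.map_add_eq_mul]
      _ = U x a * lam a := by
          rw [hlam]
          simp only [Finset.sum_filter, Finset.mul_sum]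
          refine Finset.sum_congr rfl fun z _ => ?_
          split_ifs <;> ring
  -- U * W is a nonzero multiple of the identity
  have hUW : U * W = ((Fintype.card (Fin k → F) : ℂ)) • (1 : Matrix (Fin k → F) (Fin k → F) ℂ) := by
    ext x y
    rw [Matrix.mul_apply]
    have hterm : ∀ a : Fin k → F, U x a * W a y = ψ (a ⬝ᵥ (x - y)) := by
      intro a
      show ψ (a ⬝ᵥ x) * ψ (-(a ⬝ᵥ y)) = _
      rw [← AddChar.map_add_eq_mul, dotProduct_sub]
      ring_nf
    rw [Finset.sum_congr rfl fun a _ => hterm a]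
    rcases eq_or_ne x y with h | h
    · subst h
      simp [Matrix.one_apply, AddChar.map_zero_eq_one]
    · have hxy : x - y ≠ 0 := sub_ne_zero.mpr h
      rw [sum_dot_eq_zero' ψ hψ hxy]
      simp [Matrix.one_apply, h]
  have hdetU : U.det ≠ 0 := by
    intro h0
    have hdet := congrArg Matrix.det hUW
    rw [Matrix.det_mul, h0, zero_mul, Matrix.smul_one_eq_diagonal, Matrix.det_diagonal,
      Finset.prod_const] at hdet
    have hc : ((Fintype.card (Fin k → F) : ℂ)) ≠ 0 :=
      Nat.cast_ne_zero.mpr Fintype.card_pos.ne'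
    exact pow_ne_zero _ hc hdet.symm
  -- μ is a root of the characteristic polynomial computed via the diagonalization
  have hdet0 : (μ • (1 : Matrix (Fin k → F) (Fin k → F) ℂ) - M).det = 0 := by
    have h1 := spectrum.mem_iff.mp hμ
    rw [Algebra.algebraMap_eq_smul_one] at h1
    by_contra hne
    exact h1 ((Matrix.isUnit_iff_isUnit_det _).mpr (isUnit_iff_ne_zero.mpr hne))
  have hconj : (μ • (1 : Matrix (Fin k → F) (Fin k → F) ℂ) - M) * U
      = U * Matrix.diagonal (fun a => μ - lam a) := by
    have hdd : Matrix.diagonal (fun a : Fin k → F => μ - lam a)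
        = μ • (1 : Matrix (Fin k → F) (Fin k → F) ℂ) - Matrix.diagonal lam := by
      rw [Matrix.smul_one_eq_diagonal, ← Matrix.diagonal_sub]
    rw [sub_mul, Matrix.smul_mul, Matrix.one_mul, hMU, hdd, Matrix.mul_sub,
      Matrix.mul_smul, Matrix.mul_one]
  have hprod0 : ∏ a : Fin k → F, (μ - lam a) = 0 := by
    have hdet := congrArg Matrix.det hconj
    rw [Matrix.det_mul, Matrix.det_mul, hdet0, zero_mul, Matrix.det_diagonal] at hdet
    rcases mul_eq_zero.mp hdet.symm with h | h
    · exact absurd h hdetU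
    · exact h
  obtain ⟨a, -, ha0⟩ := Finset.prod_eq_zero_iff.mp hprod0
  have hμa : μ = lam a := by
    have := sub_eq_zero.mp ha0
    exact this.symm ▸ rfl
  rcases eq_or_ne a 0 with rfl | hane
  · -- trivial eigenvalue
    left
    have hfil : (Finset.univ.filter (fun z : Fin k → F =>
          -(z ⟨0, hk⟩) ^ 2 + ∑ i ∈ Finset.univ.erase ⟨0, hk⟩, (z i) ^ 2 = 0))
        = univ.filter (fun z : Fin k → F => Qc z = 0) :=
      Finset.filter_congr fun z _ => by rw [hQeq z]
    rw [hμa, hlam, hfil]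
    simp [zero_dotProduct, AddChar.map_zero_eq_one]
  · -- nontrivial eigenvalues
    have hqC : (Fintype.card F : ℂ) ≠ 0 := Nat.cast_ne_zero.mpr Fintype.card_pos.ne'
    have hkey := key_eigen hq ψ hψ hk hkeven hane
    have hg2 : g ^ 2 = -(Fintype.card F : ℂ) := by
      rw [hgdef, gaussSum_sq (qchar_ne_one hF2) qchar_quadratic hψ, qchar_neg_one hq]
      ring
    have hgk : g ^ k = (Fintype.card F : ℂ) ^ (2 * m) := by
      calc g ^ k = (g ^ 2) ^ (2 * m) := by
            rw [← pow_mul, hm]; ring_nf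
        _ = (-(Fintype.card F : ℂ)) ^ (2 * m) := by rw [hg2]
        _ = (Fintype.card F : ℂ) ^ (2 * m) := Even.neg_pow (even_two_mul m) _
    have hpow : (Fintype.card F : ℂ) ^ (2 * m) = (Fintype.card F : ℂ) *
        (Fintype.card F : ℂ) ^ (2 * m - 1) := by
      rw [← pow_succ']
      congr 1
      omega
    rw [hgk] at hkey
    have hk2 : (k - 2) / 2 = 2 * m - 1 := by omega
    have hk2' : k / 2 = 2 * m := by omega
    by_cases hQa : Qc a = 0
    · right; right
      rw [if_pos hQa] at hkey
      have hval : lam a = (Fintype.card F : ℂ) ^ (2 * m - 1)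
          - (Fintype.card F : ℂ) ^ (2 * m) := by
        refine mul_left_cancel₀ hqC ?_
        rw [hkey, hpow]
        ring
      rw [hμa, hval, hk2, hk2']
    · right; left
      rw [if_neg hQa] at hkey
      have hval : lam a = (Fintype.card F : ℂ) ^ (2 * m - 1) := by
        refine mul_left_cancel₀ hqC ?_
        rw [hkey, hpow]
        ring
      rw [hμa, hval, hk2]
end
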